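/- arXiv:1203.1389 — 4 statements merged into one kernel-verified Lean document; each statement's English description precedes it below -/
import Mathlib

section
/- Let $p(\cdot)$ be any symmetric probability distribution on $\mathbb{Z}^d$, $d\geq 1$, with $p(0)\geq\frac{1}{2}$. For $x\in\mathbb{Z}^d$ let $\mathbb{P}^Z_x$ denote the law of a random walk $Z=(Z_n)_{n\geq 0}$ on $\mathbb{Z}^d$ with $Z_0=x$ and i.i.d. increments of law $p$. For a deterministic sequence $\phi=(\phi_i)_{i\geq 0}$ in $\mathbb{Z}^d$, define $\tilde\tau_\phi:=\min\{n\geq 0: Z_n=\phi_n \text{ or } Z_n=\phi_{n+1}\}$, and let $\tilde\tau_0$ denote this hitting time when $\phi\equiv 0$. Then for every $\phi$ and every $n\in\mathbb{N}$, $\sum_{x\in\mathbb{Z}^d} \mathbb{P}^Z_x(\tilde\tau_\phi\leq n) \geq \sum_{x\in\mathbb{Z}^d} \mathbb{P}^Z_x(\tilde\tau_0\leq n)$. -/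
open MeasureTheory ProbabilityTheory Finset
open scoped ENNReal

/-!
Summing over starting points and decomposing by the first visit to the trap,
`∑ₓ Pₓ(τ_ψ ≤ n) = ∑_{m ≤ n} y m`, where `y m` is the probability that no block of increments
`[k, m)` with `k < m` sums to `ψ m - ψ k`. Decomposing by the first, resp. last, such block gives
triangular renewal systems `y + L y = 1` and `x + Lᵀ x = 1` with `L k m = p^{*(m-k)} (ψ m - ψ k)`.
Pairing with the nonnegative dual solution `x` shows that `∑ y` can only decrease when `L` grows
entrywise, and the constant trap maximises every entry: an even convolution power is an
autocorrelation `∑ g x * g (x + z)`, maximal at `z = 0` by AM-GM, and for an odd power laziness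
`p 0 ≥ 1/2` lets the atom at `0` absorb the extra step. Finally, the trap `{φ m, φ (m + 1)}`
catches at least what `φ m` alone does.
-/

theorem ENNReal.two_mul_le_add_sq (a b : ℝ≥0∞) : 2 * a * b ≤ a ^ 2 + b ^ 2 := by
  rcases eq_or_ne a ⊤ with rfl | ha
  · simp
  rcases eq_or_ne b ⊤ with rfl | hb
  · simp
  lift a to NNReal using ha
  lift b to NNReal using hb
  exact_mod_cast _root_.two_mul_le_add_sq a b

namespace DiscretePascal

theorem measure_biUnion_finset_eq_sum_sdiff_lt {ι Ω : Type*} [LinearOrder ι] [MeasurableSpace Ω]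
    (μ : Measure Ω) (s : Finset ι) {A : ι → Set Ω} (hA : ∀ i ∈ s, MeasurableSet (A i)) :
    μ (⋃ i ∈ s, A i) = ∑ i ∈ s, μ (A i \ ⋃ j ∈ s, ⋃ (_ : j < i), A j) := by
  classical
  have hunion : ⋃ i ∈ s, A i = ⋃ i ∈ s, (A i \ ⋃ j ∈ s, ⋃ (_ : j < i), A j) := by
    refine subset_antisymm ?_ (Set.biUnion_mono subset_rfl fun i _ => Set.sdiff_subset)
    intro ω hω
    obtain ⟨i, hi, hωi⟩ := Set.mem_iUnion₂.1 hω
    obtain ⟨i₀, hi₀, hmin⟩ := (s.filter (ω ∈ A ·)).exists_min_image id ⟨i, by simp [hi, hωi]⟩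
    rw [mem_filter] at hi₀
    refine Set.mem_biUnion hi₀.1 ⟨hi₀.2, ?_⟩
    simp only [Set.mem_iUnion, not_exists]
    exact fun j hj hji hωj => (hmin j (mem_filter.2 ⟨hj, hωj⟩)).not_gt hji
  rw [hunion, measure_biUnion_finset]
  · intro i hi j hj hij
    wlog hlt : j < i generalizing i j
    · exact (this hj hi hij.symm (hij.lt_or_gt.resolve_right hlt)).symm
    exact Set.disjoint_left.2 fun ω hωi hωj =>
      hωi.2 (Set.mem_biUnion hj (Set.mem_iUnion.2 ⟨hlt, hωj.1⟩))
  · exact fun i hi => (hA i hi).diff (s.measurableSet_biUnion fun j hj =>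
      MeasurableSet.iUnion fun _ => hA j hj)

theorem measure_biUnion_finset_eq_sum_sdiff_gt {ι Ω : Type*} [LinearOrder ι] [MeasurableSpace Ω]
    (μ : Measure Ω) (s : Finset ι) {A : ι → Set Ω} (hA : ∀ i ∈ s, MeasurableSet (A i)) :
    μ (⋃ i ∈ s, A i) = ∑ i ∈ s, μ (A i \ ⋃ j ∈ s, ⋃ (_ : i < j), A j) :=
  measure_biUnion_finset_eq_sum_sdiff_lt (ι := ιᵒᵈ) μ s hA

theorem tsum_measure_inter_fiber {Ω α : Type*} [MeasurableSpace Ω] {μ : Measure Ω} [Countable α]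
    [MeasurableSpace α] [MeasurableSingletonClass α] {f : Ω → α} (hf : Measurable f) {E : Set Ω}
    (hE : MeasurableSet E) : ∑' y, μ ({ω | f ω = y} ∩ E) = μ E := by
  calc ∑' y, μ ({ω | f ω = y} ∩ E) = μ (⋃ y, {ω | f ω = y} ∩ E) :=
        (measure_iUnion (fun y y' hne => Set.disjoint_left.2 fun _ h h' =>
          hne (h.1.symm.trans h'.1)) fun y => (hf (measurableSet_singleton y)).inter hE).symm
    _ = μ E := by
        congr 1
        ext
        simp

theorem sum_le_sum_of_triangular {n : ℕ} {y b x : ℕ → ℝ≥0∞} {M U : ℕ → ℕ → ℝ≥0∞}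
    (hy : ∀ m ≤ n, y m + ∑ k ∈ range m, M k m * y k = 1)
    (hb : ∀ m ≤ n, b m + ∑ k ∈ range m, U k m * b k = 1)
    (hx : ∀ k ≤ n, x k + ∑ m ∈ Ioc k n, M k m * x m = 1) (hMU : ∀ k m, M k m ≤ U k m) :
    ∑ m ∈ range (n + 1), b m ≤ ∑ m ∈ range (n + 1), y m := by
  have hmem : ∀ m ∈ range (n + 1), m ≤ n := fun m hm => Nat.lt_succ_iff.1 (mem_range.1 hm)
  have hpair : ∀ v : ℕ → ℝ≥0∞, ∑ k ∈ range (n + 1), v k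
      = ∑ m ∈ range (n + 1), x m * (v m + ∑ k ∈ range m, M k m * v k) := fun v => calc
    _ = ∑ k ∈ range (n + 1), (x k + ∑ m ∈ Ioc k n, M k m * x m) * v k :=
      sum_congr rfl fun k hk => by rw [hx k (hmem k hk), one_mul]
    _ = ∑ k ∈ range (n + 1), x k * v k
          + ∑ k ∈ range (n + 1), ∑ m ∈ Ioc k n, x m * (M k m * v k) := by
      simp only [add_mul, sum_mul, sum_add_distrib]
      congr 1
      exact sum_congr rfl fun k _ => sum_congr rfl fun m _ => by ring
    _ = ∑ m ∈ range (n + 1), x m * v m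
          + ∑ m ∈ range (n + 1), ∑ k ∈ range m, x m * (M k m * v k) := by
      congr 1
      refine sum_comm' fun k m => ?_
      simp only [mem_range, mem_Ioc]
      omega
    _ = _ := by simp only [mul_add, mul_sum, sum_add_distrib]
  calc ∑ m ∈ range (n + 1), b m
      = ∑ m ∈ range (n + 1), x m * (b m + ∑ k ∈ range m, M k m * b k) := hpair b
    _ ≤ ∑ m ∈ range (n + 1), x m * (b m + ∑ k ∈ range m, U k m * b k) := by
      gcongr with m _ k _
      exact hMU k m
    _ = ∑ m ∈ range (n + 1), x m * (y m + ∑ k ∈ range m, M k m * y k) :=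
      sum_congr rfl fun m hm => by rw [hb m (hmem m hm), hy m (hmem m hm)]
    _ = ∑ m ∈ range (n + 1), y m := (hpair y).symm

section Correlation

variable {V : Type*} [AddCommGroup V]

noncomputable def corr (f g : V → ℝ≥0∞) (w : V) : ℝ≥0∞ := ∑' x, f x * g (x + w)

theorem corr_add_left (f₁ f₂ g : V → ℝ≥0∞) (w : V) :
    corr (f₁ + f₂) g w = corr f₁ g w + corr f₂ g w := by
  simp only [corr, Pi.add_apply, add_mul, ENNReal.tsum_add]

theorem corr_add_right (f g₁ g₂ : V → ℝ≥0∞) (w : V) :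
    corr f (g₁ + g₂) w = corr f g₁ w + corr f g₂ w := by
  simp only [corr, Pi.add_apply, mul_add, ENNReal.tsum_add]

theorem corr_comp_add_right_left (f g : V → ℝ≥0∞) (c w : V) :
    corr (fun x => f (x + c)) g w = corr f g (w - c) := by
  rw [corr, ← (Equiv.subRight c).tsum_eq]
  simp only [corr, Equiv.subRight_apply, sub_add_cancel, sub_add_eq_add_sub, add_sub_assoc]

theorem corr_comp_add_right_right (f g : V → ℝ≥0∞) (c w : V) :
    corr f (fun x => g (x + c)) w = corr f g (w + c) := by
  simp only [corr, add_assoc]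

theorem corr_self_neg (g : V → ℝ≥0∞) (w : V) : corr g g (-w) = corr g g w := by
  rw [corr, ← (Equiv.addRight w).tsum_eq]
  simp only [corr, Equiv.coe_addRight, add_neg_cancel_right, mul_comm]

theorem corr_self_le (g : V → ℝ≥0∞) (w : V) : corr g g w ≤ corr g g 0 := by
  have hshift : ∑' x, g (x + w) ^ 2 = ∑' x, g x ^ 2 := (Equiv.addRight w).tsum_eq (g · ^ 2)
  have h2 : 2 * corr g g w ≤ 2 * corr g g 0 := calc
    2 * corr g g w = ∑' x, 2 * g x * g (x + w) := by
      simp only [corr, ← ENNReal.tsum_mul_left, mul_assoc]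
    _ ≤ ∑' x, (g x ^ 2 + g (x + w) ^ 2) :=
      ENNReal.tsum_le_tsum fun x => ENNReal.two_mul_le_add_sq _ _
    _ = 2 * corr g g 0 := by
      rw [ENNReal.tsum_add, hshift, ← two_mul]
      simp only [corr, add_zero, sq]
  exact (ENNReal.mul_le_mul_iff_right two_ne_zero ENNReal.ofNat_ne_top).mp h2

/-- The inequality `corr G G z ≤ corr G G 0` for `G = g + g (· + c)`. -/
theorem corr_self_add_add_two_mul_le (g : V → ℝ≥0∞) (z c : V) :
    corr g g (z + c) + corr g g (z - c) + 2 * corr g g z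
      ≤ 2 * corr g g c + 2 * corr g g 0 := by
  have h := corr_self_le (g + fun x => g (x + c)) z
  simp only [corr_add_left, corr_add_right, corr_comp_add_right_left, corr_comp_add_right_right,
    add_sub_cancel_right, sub_self, zero_add, zero_sub, corr_self_neg] at h
  calc _ = corr g g z + corr g g (z - c) + (corr g g (z + c) + corr g g z) := by ring
    _ ≤ _ := h
    _ = _ := by ring

end Correlation

section Convolution

variable {V : Type*} [AddCommGroup V]

noncomputable def conv (f g : V → ℝ≥0∞) (z : V) : ℝ≥0∞ := ∑' y, f y * g (z - y)

theorem conv_comm (f g : V → ℝ≥0∞) : conv f g = conv g f := by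
  ext z
  rw [conv, ← (Equiv.subLeft z).tsum_eq]
  simp only [conv, Equiv.subLeft_apply, sub_sub_cancel, mul_comm]

theorem conv_assoc (f g h : V → ℝ≥0∞) : conv (conv f g) h = conv f (conv g h) := by
  ext z
  calc conv (conv f g) h z = ∑' x, ∑' y, f x * (g (y - x) * h (z - y)) := by
        simp only [conv, ← ENNReal.tsum_mul_right, mul_assoc]
        exact ENNReal.tsum_comm
    _ = conv f (conv g h) z := by
        refine tsum_congr fun x => ?_
        rw [conv, ENNReal.tsum_mul_left, ← (Equiv.addRight x).tsum_eq]
        simp only [Equiv.coe_addRight, add_sub_cancel_right, sub_sub, add_comm x]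

theorem tsum_conv (f g : V → ℝ≥0∞) : ∑' z, conv f g z = (∑' y, f y) * ∑' y, g y := by
  calc ∑' z, conv f g z = ∑' y, f y * ∑' z, g (z - y) := by
        simp only [conv, ← ENNReal.tsum_mul_left]
        exact ENNReal.tsum_comm
    _ = _ := by
        rw [← ENNReal.tsum_mul_right]
        exact tsum_congr fun y => congrArg (f y * ·) ((Equiv.subRight y).tsum_eq g)

theorem conv_neg {f g : V → ℝ≥0∞} (hf : ∀ x, f (-x) = f x) (hg : ∀ x, g (-x) = g x) (z : V) :
    conv f g (-z) = conv f g z := by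
  rw [conv, ← (Equiv.neg V).tsum_eq]
  refine tsum_congr fun y => ?_
  rw [Equiv.neg_apply, hf, show -z - -y = -(z - y) by abel, hg]

theorem conv_self_eq_corr {g : V → ℝ≥0∞} (hg : ∀ x, g (-x) = g x) (z : V) :
    conv g g z = corr g g z := by
  rw [← corr_self_neg, conv, corr]
  refine tsum_congr fun y => ?_
  rw [← hg (z - y), neg_sub, sub_eq_add_neg]

variable [DecidableEq V]

theorem conv_single_zero (f : V → ℝ≥0∞) : conv f (Pi.single 0 1) = f := by
  ext z
  rw [conv, tsum_eq_single z fun y hy => by simp [sub_eq_zero, Ne.symm hy]]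
  simp

noncomputable def convPow (p : V → ℝ≥0∞) : ℕ → V → ℝ≥0∞
  | 0 => Pi.single 0 1
  | r + 1 => conv (convPow p r) p

theorem convPow_add (p : V → ℝ≥0∞) (a b : ℕ) :
    convPow p (a + b) = conv (convPow p a) (convPow p b) := by
  induction b with
  | zero => exact (conv_single_zero _).symm
  | succ b ih => rw [← add_assoc, convPow, convPow, ih, conv_assoc]

theorem tsum_convPow (p : V → ℝ≥0∞) (r : ℕ) : ∑' z, convPow p r z = (∑' x, p x) ^ r := by
  induction r with
  | zero => simp [convPow]
  | succ r ih => rw [convPow, tsum_conv, ih, pow_succ]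

theorem convPow_neg {p : V → ℝ≥0∞} (hp : ∀ x, p (-x) = p x) (r : ℕ) (z : V) :
    convPow p r (-z) = convPow p r z := by
  induction r generalizing z with
  | zero => simp [convPow, Pi.single_apply]
  | succ r ih => exact conv_neg ih hp z

end Convolution

section Lazy

variable {V : Type*} [AddCommGroup V]

theorem conv_corr_self_add_le {q : V → ℝ≥0∞} (hq : ∀ x, q (-x) = q x) (g : V → ℝ≥0∞) (z : V) :
    conv q (corr g g) z + (∑' c, q c) * corr g g z
      ≤ conv q (corr g g) 0 + (∑' c, q c) * corr g g 0 := by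
  set h := corr g g
  have hreflect : conv q h z = ∑' c, q c * h (z + c) := by
    rw [conv, ← (Equiv.neg V).tsum_eq]
    exact tsum_congr fun c => by rw [Equiv.neg_apply, hq, sub_neg_eq_add]
  have hzero : conv q h 0 = ∑' c, q c * h c :=
    tsum_congr fun c => by rw [zero_sub]; exact congrArg _ (corr_self_neg g c)
  have h2 : 2 * (conv q h z + (∑' c, q c) * h z)
      ≤ 2 * (conv q h 0 + (∑' c, q c) * h 0) := calc
    _ = ∑' c, q c * (h (z + c) + h (z - c) + 2 * h z) := by
      simp only [mul_add, ENNReal.tsum_add, ← hreflect, ENNReal.tsum_mul_right]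
      rw [conv]
      ring
    _ ≤ ∑' c, q c * (2 * h c + 2 * h 0) :=
      ENNReal.tsum_le_tsum fun c => mul_le_mul_right (corr_self_add_add_two_mul_le g z c) _
    _ = _ := by
      simp only [mul_add, mul_left_comm (q _) 2, ENNReal.tsum_add, ENNReal.tsum_mul_left,
        ENNReal.tsum_mul_right, hzero]
  exact (ENNReal.mul_le_mul_iff_right two_ne_zero ENNReal.ofNat_ne_top).mp h2

theorem conv_corr_self_le_of_lazy {p : V → ℝ≥0∞} (hsum : ∑' x, p x = 1)
    (hsymm : ∀ x, p (-x) = p x) (hhalf : 2⁻¹ ≤ p 0) {g : V → ℝ≥0∞} (hg : corr g g 0 ≠ ⊤)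
    (z : V) : conv (corr g g) p z ≤ conv (corr g g) p 0 := by
  classical
  rw [conv_comm]
  set h := corr g g
  set q : V → ℝ≥0∞ := fun c => if c = 0 then 0 else p c
  set Q := ∑' c, q c
  have hq : ∀ x, q (-x) = q x := fun x => by simp only [q, neg_eq_zero, hsymm]
  have hsplit : ∀ w, conv p h w = p 0 * h w + conv q h w := fun w => by
    rw [conv, ENNReal.tsum_eq_add_tsum_ite 0, sub_zero, conv]
    congr 1
    exact tsum_congr fun c => by split_ifs <;> simp [q, *]
  have hmass : p 0 + Q = 1 := (ENNReal.tsum_eq_add_tsum_ite 0).symm.trans hsum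
  have hp0 : p 0 ≠ ⊤ := ne_top_of_le_ne_top ENNReal.one_ne_top (hmass ▸ le_self_add)
  have hlazy : Q ≤ p 0 := by
    refine (ENNReal.add_le_add_iff_left hp0).mp ?_
    rw [hmass, ← ENNReal.inv_two_add_inv_two]
    gcongr
  have hfin : Q * h z ≠ ⊤ := ENNReal.mul_ne_top
    (ne_top_of_le_ne_top ENNReal.one_ne_top (hmass ▸ le_add_self))
    (ne_top_of_le_ne_top hg (corr_self_le g z))
  obtain ⟨D, hD⟩ := exists_add_of_le hlazy
  refine (ENNReal.add_le_add_iff_right hfin).mp ?_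
  calc conv p h z + Q * h z = p 0 * h z + (conv q h z + Q * h z) := by rw [hsplit]; ring
    _ ≤ p 0 * h z + (conv q h 0 + Q * h 0) := add_le_add le_rfl (conv_corr_self_add_le hq g z)
    _ = Q * h z + Q * h 0 + D * h z + conv q h 0 := by rw [hD]; ring
    _ ≤ Q * h z + Q * h 0 + D * h 0 + conv q h 0 := by gcongr; exact corr_self_le g z
    _ = conv p h 0 + Q * h z := by rw [hsplit, hD]; ring

theorem convPow_le_convPow_zero [DecidableEq V] {p : V → ℝ≥0∞} (hsum : ∑' x, p x = 1)
    (hsymm : ∀ x, p (-x) = p x) (hhalf : 2⁻¹ ≤ p 0) (r : ℕ) (z : V) :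
    convPow p r z ≤ convPow p r 0 := by
  have heven : ∀ s, convPow p (2 * s) = corr (convPow p s) (convPow p s) := fun s => by
    ext w; rw [two_mul, convPow_add, conv_self_eq_corr (convPow_neg hsymm s)]
  obtain ⟨s, rfl | rfl⟩ := Nat.even_or_odd' r
  · rw [heven]
    exact corr_self_le _ z
  · have hfin : corr (convPow p s) (convPow p s) 0 ≠ ⊤ := by
      refine ne_top_of_le_ne_top ENNReal.one_ne_top ?_
      rw [← heven s, ← one_pow (2 * s), ← hsum, ← tsum_convPow]
      exact ENNReal.le_tsum 0
    rw [convPow, heven]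
    exact conv_corr_self_le_of_lazy hsum hsymm hhalf hfin z

end Lazy

section Hits

variable {V Ω : Type*} [AddCommGroup V] (ξ : ℕ → Ω → V) (ψ : ℕ → V)

def hits (a b : ℕ) : Set Ω := {ω | ∑ i ∈ Ico a b, ξ i ω = ψ b - ψ a}

def noEarlierHit (m : ℕ) : Set Ω := {ω | ∀ k < m, ω ∉ hits ξ ψ k m}

def noLaterHit (n k : ℕ) : Set Ω := {ω | ∀ m ∈ Ioc k n, ω ∉ hits ξ ψ k m}

variable {ξ ψ}

theorem mem_hits_iff_of_mem_hits_right {ω : Ω} {j k m : ℕ} (hjk : j ≤ k) (hkm : k ≤ m)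
    (h : ω ∈ hits ξ ψ k m) : ω ∈ hits ξ ψ j m ↔ ω ∈ hits ξ ψ j k := by
  have := sum_Ico_consecutive (ξ · ω) hjk hkm
  simp only [hits, Set.mem_ofPred_eq] at *
  grind

theorem mem_hits_iff_of_mem_hits_left {ω : Ω} {k m j : ℕ} (hkm : k ≤ m) (hmj : m ≤ j)
    (h : ω ∈ hits ξ ψ k m) : ω ∈ hits ξ ψ k j ↔ ω ∈ hits ξ ψ m j := by
  have := sum_Ico_consecutive (ξ · ω) hkm hmj
  simp only [hits, Set.mem_ofPred_eq] at *
  grind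

end Hits

section Increments

variable {V Ω : Type*} [MeasurableSpace V] {ξ : ℕ → Ω → V}

abbrev incrementSigma (ξ : ℕ → Ω → V) (s : Finset ℕ) : MeasurableSpace Ω :=
  ⨆ i ∈ s, MeasurableSpace.comap (ξ i) ‹MeasurableSpace V›

theorem measurable_incrementSigma {s : Finset ℕ} {i : ℕ} (hi : i ∈ s) :
    Measurable[incrementSigma ξ s] (ξ i) :=
  (comap_measurable (ξ i)).mono
    (le_iSup₂ (f := fun j (_ : j ∈ s) => MeasurableSpace.comap (ξ j) _) i hi) le_rfl

section Sums

variable [AddCommGroup V] [MeasurableSingletonClass V] [MeasurableAdd₂ V] {ψ : ℕ → V}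

theorem measurableSet_sum_eq {s t : Finset ℕ} (hts : t ⊆ s) (z : V) :
    MeasurableSet[incrementSigma ξ s] {ω | ∑ i ∈ t, ξ i ω = z} :=
  (Finset.measurable_sum t fun _ hi => measurable_incrementSigma (hts hi))
    (measurableSet_singleton z)

theorem measurableSet_hits {s : Finset ℕ} {a b : ℕ} (hs : Ico a b ⊆ s) :
    MeasurableSet[incrementSigma ξ s] (hits ξ ψ a b) :=
  measurableSet_sum_eq hs _

theorem measurableSet_noEarlierHit (m : ℕ) :
    MeasurableSet[incrementSigma ξ (range m)] (noEarlierHit ξ ψ m) := by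
  have : noEarlierHit ξ ψ m = ⋂ k ∈ range m, (hits ξ ψ k m)ᶜ := by
    ext; simp [noEarlierHit]
  rw [this]
  exact .biInter (range m).countable_toSet fun k _ =>
    (measurableSet_hits fun i hi => mem_range.2 (mem_Ico.1 hi).2).compl

theorem measurableSet_noLaterHit (n k : ℕ) :
    MeasurableSet[incrementSigma ξ (Ico k n)] (noLaterHit ξ ψ n k) := by
  have : noLaterHit ξ ψ n k = ⋂ m ∈ Ioc k n, (hits ξ ψ k m)ᶜ := by
    ext; simp [noLaterHit]
  rw [this]
  exact .biInter (Ioc k n).countable_toSet fun m hm =>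
    (measurableSet_hits (Ico_subset_Ico_right (mem_Ioc.1 hm).2)).compl

end Sums

variable [MeasurableSpace Ω] {μ : Measure Ω}

theorem incrementSigma_le (hmeas : ∀ i, Measurable (ξ i)) (s : Finset ℕ) :
    incrementSigma ξ s ≤ ‹MeasurableSpace Ω› :=
  iSup₂_le fun i _ => (hmeas i).comap_le

theorem measure_inter_eq_mul_of_disjoint (hmeas : ∀ i, Measurable (ξ i)) (hindep : iIndepFun ξ μ)
    {s t : Finset ℕ} (hst : Disjoint s t) {A B : Set Ω} (hA : MeasurableSet[incrementSigma ξ s] A)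
    (hB : MeasurableSet[incrementSigma ξ t] B) : μ (A ∩ B) = μ A * μ B :=
  (Indep_iff _ _ μ).1 (indep_iSup_of_disjoint (fun i => (hmeas i).comap_le) hindep.iIndep
    (Finset.disjoint_coe.2 hst)) A B hA hB

end Increments

section RandomWalk

variable {V Ω : Type*} [AddCommGroup V] [Countable V] [MeasurableSpace V]
  [MeasurableSingletonClass V] [MeasurableAdd₂ V] [MeasurableSpace Ω] {μ : Measure Ω}
  {ξ : ℕ → Ω → V}

theorem tsum_measure_exists_hit (hmeas : ∀ i, Measurable (ξ i)) (ψ : ℕ → V) (n : ℕ) :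
    ∑' x, μ {ω | ∃ m ≤ n, x + ∑ i ∈ range m, ξ i ω = ψ m}
      = ∑ m ∈ range (n + 1), μ (noEarlierHit ξ ψ m) := by
  have hS : ∀ m, Measurable fun ω => ∑ i ∈ range m, ξ i ω := fun m =>
    Finset.measurable_sum _ fun i _ => hmeas i
  have hunion : ∀ x, {ω | ∃ m ≤ n, x + ∑ i ∈ range m, ξ i ω = ψ m}
      = ⋃ m ∈ range (n + 1), {ω | ∑ i ∈ range m, ξ i ω = ψ m - x} := fun x => by
    ext; simp [eq_sub_iff_add_eq']
  have hfirst : ∀ x, ∀ m ∈ range (n + 1),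
      {ω | ∑ i ∈ range m, ξ i ω = ψ m - x}
        \ ⋃ k ∈ range (n + 1), ⋃ (_ : k < m), {ω | ∑ i ∈ range k, ξ i ω = ψ k - x}
      = {ω | ∑ i ∈ range m, ξ i ω = ψ m - x} ∩ noEarlierHit ξ ψ m := by
    intro x m hm
    ext ω
    simp only [Set.mem_sdiff, Set.mem_inter_iff, Set.mem_iUnion, noEarlierHit, hits,
      Set.mem_ofPred_eq, mem_range, not_exists, and_congr_right_iff]
    intro hω
    rw [mem_range] at hm
    have key : ∀ k ≤ m,
        ∑ i ∈ range k, ξ i ω = ψ k - x ↔ ∑ i ∈ Ico k m, ξ i ω = ψ m - ψ k := fun k hk => by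
      have := sum_range_add_sum_Ico (ξ · ω) hk
      grind
    exact ⟨fun h k hk => (key k hk.le).not.1 (h k (by omega) hk),
      fun h k _ hk => (key k hk.le).not.2 (h k hk)⟩
  calc ∑' x, μ {ω | ∃ m ≤ n, x + ∑ i ∈ range m, ξ i ω = ψ m}
      = ∑' x, ∑ m ∈ range (n + 1),
          μ ({ω | ∑ i ∈ range m, ξ i ω = ψ m - x} ∩ noEarlierHit ξ ψ m) := tsum_congr fun x => by
        rw [hunion, measure_biUnion_finset_eq_sum_sdiff_lt μ _
          (A := fun m => {ω | ∑ i ∈ range m, ξ i ω = ψ m - x})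
          fun m _ => hS m (measurableSet_singleton _)]
        exact sum_congr rfl fun m hm => by rw [hfirst x m hm]
    _ = ∑ m ∈ range (n + 1), ∑' x,
          μ ({ω | ∑ i ∈ range m, ξ i ω = ψ m - x} ∩ noEarlierHit ξ ψ m) :=
        Summable.tsum_finsetSum fun _ _ => ENNReal.summable
    _ = ∑ m ∈ range (n + 1), μ (noEarlierHit ξ ψ m) := sum_congr rfl fun m _ => by
        rw [← (Equiv.subLeft (ψ m)).tsum_eq]
        simp only [Equiv.subLeft_apply, sub_sub_cancel]
        exact tsum_measure_inter_fiber (hS m)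
          (incrementSigma_le hmeas _ _ (measurableSet_noEarlierHit m))

variable [DecidableEq V] [IsProbabilityMeasure μ] {p : V → ℝ≥0∞}

theorem measure_sum_eq_convPow (hmeas : ∀ i, Measurable (ξ i)) (hindep : iIndepFun ξ μ)
    (hlaw : ∀ i x, μ {ω | ξ i ω = x} = p x) (t : Finset ℕ) (z : V) :
    μ {ω | ∑ i ∈ t, ξ i ω = z} = convPow p #t z := by
  induction t using Finset.induction_on generalizing z with
  | empty => by_cases hz : z = 0 <;> simp [convPow, hz, eq_comm]
  | insert a t ha ih =>
    have hunion : {ω | ∑ i ∈ insert a t, ξ i ω = z}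
        = ⋃ y, {ω | ∑ i ∈ t, ξ i ω = y} ∩ {ω | ξ a ω = z - y} := by
      ext ω
      simp [sum_insert ha, eq_sub_iff_add_eq, add_comm]
    have hξa : ∀ w, MeasurableSet[incrementSigma ξ {a}] {ω | ξ a ω = w} := fun w =>
      measurable_incrementSigma (mem_singleton_self a) (measurableSet_singleton w)
    rw [hunion, measure_iUnion, card_insert_of_notMem ha, convPow, conv]
    · refine tsum_congr fun y => ?_
      rw [measure_inter_eq_mul_of_disjoint hmeas hindep (disjoint_singleton_right.2 ha)
        (measurableSet_sum_eq subset_rfl y) (hξa _), ih, hlaw]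
    · exact fun y y' hne => Set.disjoint_left.2 fun ω h h' => hne (h.1.symm.trans h'.1)
    · exact fun y => (incrementSigma_le hmeas _ _ (measurableSet_sum_eq subset_rfl y)).inter
        (incrementSigma_le hmeas _ _ (hξa _))

theorem measure_hits (hmeas : ∀ i, Measurable (ξ i)) (hindep : iIndepFun ξ μ)
    (hlaw : ∀ i x, μ {ω | ξ i ω = x} = p x) (ψ : ℕ → V) (a b : ℕ) :
    μ (hits ξ ψ a b) = convPow p (b - a) (ψ b - ψ a) := by
  rw [hits, measure_sum_eq_convPow hmeas hindep hlaw, Nat.card_Ico]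

theorem measure_noEarlierHit_add_sum (hmeas : ∀ i, Measurable (ξ i)) (hindep : iIndepFun ξ μ)
    (hlaw : ∀ i x, μ {ω | ξ i ω = x} = p x) (ψ : ℕ → V) (m : ℕ) :
    μ (noEarlierHit ξ ψ m)
      + ∑ k ∈ range m, convPow p (m - k) (ψ m - ψ k) * μ (noEarlierHit ξ ψ k) = 1 := by
  have hcompl : (noEarlierHit ξ ψ m)ᶜ = ⋃ k ∈ range m, hits ξ ψ k m := by
    ext; simp [noEarlierHit]
  have hfirst : ∀ k ∈ range m, hits ξ ψ k m \ ⋃ j ∈ range m, ⋃ (_ : j < k), hits ξ ψ j m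
      = hits ξ ψ k m ∩ noEarlierHit ξ ψ k := by
    intro k hk
    ext ω
    simp only [Set.mem_sdiff, Set.mem_inter_iff, Set.mem_iUnion, noEarlierHit, Set.mem_ofPred_eq,
      mem_range, not_exists, and_congr_right_iff]
    intro hω
    rw [mem_range] at hk
    exact ⟨fun h j hj =>
        (mem_hits_iff_of_mem_hits_right hj.le hk.le hω).not.1 (h j (hj.trans hk) hj),
      fun h j _ hj => (mem_hits_iff_of_mem_hits_right hj.le hk.le hω).not.2 (h j hj)⟩
  rw [← prob_add_prob_compl (μ := μ) (incrementSigma_le hmeas _ _ (measurableSet_noEarlierHit m)),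
    hcompl, measure_biUnion_finset_eq_sum_sdiff_lt μ _
      fun k _ => incrementSigma_le hmeas _ _ (measurableSet_hits subset_rfl)]
  congr 1
  refine sum_congr rfl fun k hk => ?_
  rw [hfirst k hk, measure_inter_eq_mul_of_disjoint hmeas hindep ?_
    (measurableSet_hits subset_rfl) (measurableSet_noEarlierHit k),
    measure_hits hmeas hindep hlaw]
  rw [range_eq_Ico]
  exact (Ico_disjoint_Ico_consecutive 0 k m).symm

theorem measure_noLaterHit_add_sum (hmeas : ∀ i, Measurable (ξ i)) (hindep : iIndepFun ξ μ)
    (hlaw : ∀ i x, μ {ω | ξ i ω = x} = p x) (ψ : ℕ → V) (n k : ℕ) :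
    μ (noLaterHit ξ ψ n k)
      + ∑ m ∈ Ioc k n, convPow p (m - k) (ψ m - ψ k) * μ (noLaterHit ξ ψ n m) = 1 := by
  have hcompl : (noLaterHit ξ ψ n k)ᶜ = ⋃ m ∈ Ioc k n, hits ξ ψ k m := by
    ext; simp [noLaterHit, and_assoc]
  have hlast : ∀ m ∈ Ioc k n, hits ξ ψ k m \ ⋃ j ∈ Ioc k n, ⋃ (_ : m < j), hits ξ ψ k j
      = hits ξ ψ k m ∩ noLaterHit ξ ψ n m := by
    intro m hm
    ext ω
    simp only [Set.mem_sdiff, Set.mem_inter_iff, Set.mem_iUnion, noLaterHit, Set.mem_ofPred_eq,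
      mem_Ioc, not_exists, and_congr_right_iff]
    intro hω
    obtain ⟨hkm, -⟩ := mem_Ioc.1 hm
    exact ⟨fun h j hj => (mem_hits_iff_of_mem_hits_left hkm.le hj.1.le hω).not.1
        (h j ⟨hkm.trans hj.1, hj.2⟩ hj.1),
      fun h j hj hmj => (mem_hits_iff_of_mem_hits_left hkm.le hmj.le hω).not.2 (h j ⟨hmj, hj.2⟩)⟩
  rw [← prob_add_prob_compl (μ := μ) (incrementSigma_le hmeas _ _ (measurableSet_noLaterHit n k)),
    hcompl, measure_biUnion_finset_eq_sum_sdiff_gt μ _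
      fun m _ => incrementSigma_le hmeas _ _ (measurableSet_hits subset_rfl)]
  congr 1
  refine sum_congr rfl fun m hm => ?_
  rw [hlast m hm, measure_inter_eq_mul_of_disjoint hmeas hindep ?_
    (measurableSet_hits subset_rfl) (measurableSet_noLaterHit n m),
    measure_hits hmeas hindep hlaw]
  exact Ico_disjoint_Ico_consecutive k m n

end RandomWalk

end DiscretePascal

open DiscretePascal in
theorem discrete_pascal_lazy_general
    (d : ℕ)
    (p : (Fin d → ℤ) → ℝ≥0∞) (hsum : ∑' x : Fin d → ℤ, p x = 1)
    (hsymm : ∀ x : Fin d → ℤ, p (-x) = p x)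
    (hhalf : 2⁻¹ ≤ p 0)
    {Ω : Type*} [MeasurableSpace Ω] (μ : Measure Ω) [IsProbabilityMeasure μ]
    (ξ : ℕ → Ω → (Fin d → ℤ))
    (hmeas : ∀ i, Measurable (ξ i))
    (hindep : iIndepFun ξ μ)
    (hlaw : ∀ i (x : Fin d → ℤ), μ {ω | ξ i ω = x} = p x)
    (φ : ℕ → (Fin d → ℤ)) (n : ℕ) :
    ∑' x : Fin d → ℤ, μ {ω | ∃ m ≤ n, x + ∑ i ∈ Finset.range m, ξ i ω = 0} ≤
      ∑' x : Fin d → ℤ, μ {ω | ∃ m ≤ n,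
        x + ∑ i ∈ Finset.range m, ξ i ω = φ m ∨
        x + ∑ i ∈ Finset.range m, ξ i ω = φ (m + 1)} := by
  have hcompare : ∑ m ∈ range (n + 1), μ (noEarlierHit ξ (fun _ => 0) m)
      ≤ ∑ m ∈ range (n + 1), μ (noEarlierHit ξ φ m) :=
    sum_le_sum_of_triangular
      (fun m _ => measure_noEarlierHit_add_sum hmeas hindep hlaw φ m)
      (fun m _ => measure_noEarlierHit_add_sum hmeas hindep hlaw _ m)
      (fun k _ => measure_noLaterHit_add_sum hmeas hindep hlaw φ n k)
      fun k m => (convPow_le_convPow_zero hsum hsymm hhalf _ _).trans_eq (by rw [sub_self])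
  calc _ = ∑ m ∈ range (n + 1), μ (noEarlierHit ξ (fun _ => 0) m) :=
        tsum_measure_exists_hit hmeas _ n
    _ ≤ ∑ m ∈ range (n + 1), μ (noEarlierHit ξ φ m) := hcompare
    _ = ∑' x, μ {ω | ∃ m ≤ n, x + ∑ i ∈ range m, ξ i ω = φ m} :=
        (tsum_measure_exists_hit hmeas φ n).symm
    _ ≤ _ := ENNReal.tsum_le_tsum fun x => measure_mono <|
      Set.ofPred_subset_ofPred.2 fun _ ⟨m, hm, h⟩ => ⟨m, hm, Or.inl h⟩

/-- **Discrete Pascal principle on `ℤ^d` for symmetric increment distributions with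
`p 0 ≥ 1/2`.**  A walk started at `x` is `x + ξ 0 + ⋯ + ξ (m-1)` with `ξ` i.i.d. of law
`p`.  For a deterministic trap path `φ`, the event `{τ̃_φ ≤ n}` is
`{∃ m ≤ n, Z m = φ m ∨ Z m = φ (m+1)}`.  Summing over all starting points `x`, the trap
path `φ` catches at least as many walkers by time `n` as the constant trap path `0`. -/
theorem discrete_pascal_lazy
    (d : ℕ) (hd : 1 ≤ d)
    (p : (Fin d → ℤ) → ℝ≥0∞) (hsum : ∑' x : Fin d → ℤ, p x = 1)
    (hsymm : ∀ x : Fin d → ℤ, p (-x) = p x)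
    (hhalf : 2⁻¹ ≤ p 0)
    {Ω : Type*} [MeasurableSpace Ω] (μ : Measure Ω) [IsProbabilityMeasure μ]
    (ξ : ℕ → Ω → (Fin d → ℤ))
    (hmeas : ∀ i, Measurable (ξ i))
    (hindep : iIndepFun ξ μ)
    (hlaw : ∀ i (x : Fin d → ℤ), μ {ω | ξ i ω = x} = p x)
    (φ : ℕ → (Fin d → ℤ)) (n : ℕ) :
    ∑' x : Fin d → ℤ, μ {ω | ∃ m ≤ n, x + ∑ i ∈ Finset.range m, ξ i ω = 0} ≤
      ∑' x : Fin d → ℤ, μ {ω | ∃ m ≤ n,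
        x + ∑ i ∈ Finset.range m, ξ i ω = φ m ∨
        x + ∑ i ∈ Finset.range m, ξ i ω = φ (m + 1)} :=
  discrete_pascal_lazy_general d p hsum hsymm hhalf μ ξ hmeas hindep hlaw φ n
end

section
/- Let $p(\cdot)$ be any symmetric probability distribution on $\mathbb{Z}^d$, $d\geq 1$. Let $(\bar Z_n)_{n\geq 0}$ be the random path on $\mathbb{Z}^d$ such that $(\bar Z_{2k})_{k\geq 0}$ is a random walk started at $0$ with i.i.d. increments of law $p$ and $\bar Z_{2k+1}=\bar Z_{2k}$ for all $k\geq 0$, and let $(f_n)_{n\geq 0}$ be a deterministic path in $\mathbb{Z}^d$ with $f_{2k-1}=f_{2k}$ for all $k\geq 1$. Let $Z$ be a random walk with i.i.d. increments of law $p$, set $\phi_i:=-f_{2i}$ for $i\geq 0$, and $\tilde\tau_\phi:=\min\{m\geq 0: Z_m=\phi_m \text{ or } Z_m=\phi_{m+1}\}$. Then for every $n\in\mathbb{N}$, $\mathbb{E}[|R_{2n+1}(\bar Z+f)|] = \sum_{x\in\mathbb{Z}^d}\mathbb{P}^Z_x(\tilde\tau_\phi\leq n)$, where $\mathbb{P}^Z_x$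 denotes the law of $Z$ started at $x$. -/
/-! Summing the indicator of "x is visited" over all sites x, the expected size of the range is
the sum of the visiting probabilities. At even times `2m` and odd times `2m+1` the path
`Zbar + f` sits at `S_m - φ m` and `S_m - φ (m+1)`, where `S` is the walk of the increments `ξ`;
so `x` is visited before time `2n+1` iff the walk started at `-x` meets `φ m` or `φ (m+1)` at some
`m ≤ n`. Reindexing the sum by `x ↦ -x` and replacing `ξ` by `ζ`, which has the same joint law,
gives the trapping probabilities. -/

open MeasureTheory ProbabilityTheory Finset
open scoped ENNReal

theorem lintegral_card_eq_tsum_measure {Ω α : Type*} [MeasurableSpace Ω] [Countable α]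
    [DecidableEq α] (μ : Measure Ω) (A : Ω → Finset α)
    (hA : ∀ x, MeasurableSet {ω | x ∈ A ω}) :
    ∫⁻ ω, ((A ω).card : ℝ≥0∞) ∂μ = ∑' x, μ {ω | x ∈ A ω} := by
  have hcard : ∀ ω, ((A ω).card : ℝ≥0∞) = ∑' x, {ω | x ∈ A ω}.indicator 1 ω := fun ω => by
    rw [tsum_eq_sum (s := A ω) fun x hx => by simp [hx]]
    simp_all
  simp_rw [hcard]
  rw [lintegral_tsum fun x => (measurable_one.indicator (hA x)).aemeasurable]
  exact tsum_congr fun x => lintegral_indicator_one (hA x)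

theorem identDistrib_of_measure_eq_singleton {Ω Ω' E : Type*} [MeasurableSpace Ω]
    [MeasurableSpace Ω'] [MeasurableSpace E] [Countable E] [MeasurableSingletonClass E]
    {μ : Measure Ω} {ν : Measure Ω'} {X : Ω → E} {Y : Ω' → E}
    (hX : Measurable X) (hY : Measurable Y) (h : ∀ x, μ {ω | X ω = x} = ν {ω | Y ω = x}) :
    IdentDistrib X Y μ ν where
  aemeasurable_fst := hX.aemeasurable
  aemeasurable_snd := hY.aemeasurable
  map_eq := Measure.ext_of_singleton fun x => by
    rw [Measure.map_apply hX (measurableSet_singleton x),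
      Measure.map_apply hY (measurableSet_singleton x)]
    exact h x

section Trap

variable {E : Type*} [AddCommGroup E]

/-- `η ∈ trapSet φ n x` says `τ̃_φ ≤ n` for the walk `x + η 0 + ⋯ + η (m-1)`. -/
def trapSet (φ : ℕ → E) (n : ℕ) (x : E) : Set (ℕ → E) :=
  {η | ∃ m ≤ n, x + ∑ i ∈ range m, η i = φ m ∨ x + ∑ i ∈ range m, η i = φ (m + 1)}

theorem measurableSet_trapSet [MeasurableSpace E] [MeasurableAdd₂ E] [MeasurableSingletonClass E]
    (φ : ℕ → E) (n : ℕ) (x : E) : MeasurableSet (trapSet φ n x) := by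
  set walk : ℕ → (ℕ → E) → E := fun m η => x + ∑ i ∈ range m, η i
  have hwalk : ∀ m, Measurable (walk m) := fun m =>
    measurable_const.add (Finset.measurable_sum _ fun i _ => measurable_pi_apply i)
  have hunion : trapSet φ n x = ⋃ m ∈ Set.Iic n, (walk m ⁻¹' {φ m} ∪ walk m ⁻¹' {φ (m + 1)}) := by
    ext; simp [trapSet, walk]
  rw [hunion]
  exact .biUnion (Set.to_countable _) fun m _ =>
    (hwalk m (measurableSet_singleton _)).union (hwalk m (measurableSet_singleton _))

theorem mem_image_lazyWalk_add_iff [DecidableEq E] (η f φ : ℕ → E)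
    (hf : ∀ k, 1 ≤ k → f (2 * k - 1) = f (2 * k)) (hφ : ∀ i, φ i = -f (2 * i))
    (n : ℕ) (x : E) :
    x ∈ (range (2 * n + 2)).image (fun i => ∑ j ∈ range (i / 2), η j + f i) ↔
      η ∈ trapSet φ n (-x) := by
  have hodd : ∀ m, f (2 * m + 1) = -φ (m + 1) := fun m => by
    rw [hφ, neg_neg, ← hf (m + 1) (by omega)]; rfl
  have heven : ∀ m, f (2 * m) = -φ m := fun m => by rw [hφ, neg_neg]
  simp only [mem_image, mem_range, trapSet, Set.mem_ofPred_eq, neg_add_eq_iff_eq_add,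
    ← sub_eq_iff_eq_add']
  constructor
  · rintro ⟨i, hi, rfl⟩
    obtain ⟨m, rfl | rfl⟩ := Nat.even_or_odd' i
    · refine ⟨m, by omega, Or.inl ?_⟩
      rw [Nat.mul_div_cancel_left m two_pos, heven]; abel
    · refine ⟨m, by omega, Or.inr ?_⟩
      rw [show (2 * m + 1) / 2 = m by omega, hodd]; abel
  · rintro ⟨m, hm, h | h⟩
    · exact ⟨2 * m, by omega, by rw [Nat.mul_div_cancel_left m two_pos, heven, ← h]; abel⟩
    · exact ⟨2 * m + 1, by omega, by rw [show (2 * m + 1) / 2 = m by omega, hodd, ← h]; abel⟩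

end Trap

theorem range_eq_trapped_mass_general
    (d : ℕ)
    (p : (Fin d → ℤ) → ℝ≥0∞)
    {Ω : Type*} [MeasurableSpace Ω] (μ : Measure Ω)
    (ξ : ℕ → Ω → (Fin d → ℤ))
    (hmeas : ∀ i, Measurable (ξ i))
    (hindep : iIndepFun ξ μ)
    (hlaw : ∀ i (x : Fin d → ℤ), μ {ω | ξ i ω = x} = p x)
    (Zbar : ℕ → Ω → (Fin d → ℤ))
    (hZbar : ∀ n ω, Zbar n ω = ∑ i ∈ Finset.range (n / 2), ξ i ω)
    (f : ℕ → (Fin d → ℤ))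
    (hf : ∀ k : ℕ, 1 ≤ k → f (2 * k - 1) = f (2 * k))
    {Ω' : Type*} [MeasurableSpace Ω'] (μ' : Measure Ω')
    (ζ : ℕ → Ω' → (Fin d → ℤ))
    (hmeas' : ∀ i, Measurable (ζ i))
    (hindep' : iIndepFun ζ μ')
    (hlaw' : ∀ i (x : Fin d → ℤ), μ' {ω | ζ i ω = x} = p x)
    (φ : ℕ → (Fin d → ℤ))
    (hφ : ∀ i, φ i = -f (2 * i))
    (n : ℕ) :
    ∫⁻ ω, (((Finset.range (2 * n + 2)).image fun i => Zbar i ω + f i).card : ℝ≥0∞) ∂μ =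
      ∑' x : Fin d → ℤ, μ' {ω | ∃ m ≤ n,
        x + ∑ i ∈ Finset.range m, ζ i ω = φ m ∨
        x + ∑ i ∈ Finset.range m, ζ i ω = φ (m + 1)} := by
  set incr : Ω → ℕ → Fin d → ℤ := fun ω i => ξ i ω
  have hevent : ∀ x, {ω | x ∈ (range (2 * n + 2)).image fun i => Zbar i ω + f i} =
      incr ⁻¹' trapSet φ n (-x) := fun x => by
    ext ω
    simp only [hZbar]
    exact mem_image_lazyWalk_add_iff _ f φ hf hφ n x
  have hincr : Measurable incr := measurable_pi_lambda _ hmeas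
  have hlaw_incr : IdentDistrib incr (fun ω i => ζ i ω) μ μ' :=
    .pi (fun i => identDistrib_of_measure_eq_singleton (hmeas i) (hmeas' i) fun x => by
      rw [hlaw, hlaw']) hindep hindep'
  calc _ = ∑' x, μ (incr ⁻¹' trapSet φ n (-x)) := by
        rw [lintegral_card_eq_tsum_measure μ _ fun x => by
          simpa only [hevent] using hincr (measurableSet_trapSet φ n (-x))]
        simp only [hevent]
    _ = ∑' x, μ (incr ⁻¹' trapSet φ n x) :=
        (Equiv.neg _).tsum_eq fun x => μ (incr ⁻¹' trapSet φ n x)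
    _ = _ := tsum_congr fun x => hlaw_incr.measure_mem_eq (measurableSet_trapSet φ n x)

/-- **Reduction of the insertion-perturbed range to a discrete trapping problem.**
`p` is any symmetric probability distribution on `ℤ^d`.  `Zbar` is the path with
`Zbar (2k) = ξ 0 + ⋯ + ξ (k-1)` (a random walk started at `0` with i.i.d. increments of
law `p`, on `(Ω, μ)`) and `Zbar (2k+1) = Zbar (2k)`; `f` is a deterministic path with
`f (2k-1) = f (2k)` for `k ≥ 1`.  `Z` is a random walk with i.i.d. increments `ζ` of law
`p` (on `(Ω', μ')`), started at `x` it is `x + ζ 0 + ⋯ + ζ (m-1)`.  With `φ i := -f (2i)`,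
the expected cardinality of the range of `Zbar + f` up to time `2n+1` equals the total
mass, summed over starting points `x`, of the event
`τ̃_φ ≤ n`, i.e. `∃ m ≤ n, Z m = φ m ∨ Z m = φ (m+1)`. -/
theorem range_eq_trapped_mass
    (d : ℕ) (hd : 1 ≤ d)
    (p : (Fin d → ℤ) → ℝ≥0∞) (hsum : ∑' x : Fin d → ℤ, p x = 1)
    (hsymm : ∀ x : Fin d → ℤ, p (-x) = p x)
    {Ω : Type*} [MeasurableSpace Ω] (μ : Measure Ω) [IsProbabilityMeasure μ]
    (ξ : ℕ → Ω → (Fin d → ℤ))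
    (hmeas : ∀ i, Measurable (ξ i))
    (hindep : iIndepFun ξ μ)
    (hlaw : ∀ i (x : Fin d → ℤ), μ {ω | ξ i ω = x} = p x)
    (Zbar : ℕ → Ω → (Fin d → ℤ))
    (hZbar : ∀ n ω, Zbar n ω = ∑ i ∈ Finset.range (n / 2), ξ i ω)
    (f : ℕ → (Fin d → ℤ))
    (hf : ∀ k : ℕ, 1 ≤ k → f (2 * k - 1) = f (2 * k))
    {Ω' : Type*} [MeasurableSpace Ω'] (μ' : Measure Ω') [IsProbabilityMeasure μ']
    (ζ : ℕ → Ω' → (Fin d → ℤ))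
    (hmeas' : ∀ i, Measurable (ζ i))
    (hindep' : iIndepFun ζ μ')
    (hlaw' : ∀ i (x : Fin d → ℤ), μ' {ω | ζ i ω = x} = p x)
    (φ : ℕ → (Fin d → ℤ))
    (hφ : ∀ i, φ i = -f (2 * i))
    (n : ℕ) :
    ∫⁻ ω, (((Finset.range (2 * n + 2)).image fun i => Zbar i ω + f i).card : ℝ≥0∞) ∂μ =
      ∑' x : Fin d → ℤ, μ' {ω | ∃ m ≤ n,
        x + ∑ i ∈ Finset.range m, ζ i ω = φ m ∨
        x + ∑ i ∈ Finset.range m, ζ i ω = φ (m + 1)} :=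
  range_eq_trapped_mass_general d p μ ξ hmeas hindep hlaw Zbar hZbar f hf μ' ζ hmeas' hindep' hlaw'
    φ hφ n
end

section
/- Let $p(\cdot)$ be a symmetric probability distribution on $\mathbb{Z}$ satisfying $p(k)\geq p(k+1)$ for all $k\geq 1$ and $p(0)\geq p(3)$. Fix a sequence $\phi=(\phi_i)_{i\geq 0}$ in $\mathbb{Z}$, and for $n\geq 0$, $x\in\mathbb{Z}$ define $v^\phi_n(x):=1-\sum_{z\in\mathbb{Z}}\mathbb{P}^Z_z(Z_n=x,\ \tilde\tau_\phi>n)$, where $\mathbb{P}^Z_z$ is the law of the random walk with increments of law $p$ started at $z$ and $\tilde\tau_\phi:=\min\{m\geq 0: Z_m=\phi_m \text{ or } Z_m=\phi_{m+1}\}$; let $v^0_n$ denote the case $\phi\equiv 0$. Suppose that for some $n\geq 0$, $v^\phi_n$ symmetrically dominates $v^0_n$, meaning $\sum_{|x|\geq k} v^0_n(x)\leq\sum_{|x|\geq k} v^\phi_n(x_0+x)$ for all integers $k\geq 0$ and all $x_0\in\mathbb{Z}$. Then $v^\phi_{n+1}$ symmetrically dominates $v^0_{n+1}$. -/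
/-!
Off the traps, one step of the dynamics is convolution with `p`, and the tail mass
`∑_{|x| ≥ k} (p * F) (c + x)` equals `∑_z F (c + z) ρ_k z` with `ρ_k z = P(|z + ξ| ≥ k)`.
The assumptions on `p` make `ρ_k` a nondecreasing function of `|z|` when `k ≥ 2`, so `ρ_k` is a
nonnegative combination of the indicators of `{|z| ≥ j}`, and domination of the tails of `F` by
those of `G` passes to `p * F` and `p * G`. For `k = 1`, `ρ_1` may decrease from `0` to `1`:
centring `G` at the trap `a = φ (n + 1)`, where `F 0 = G a = 1`, that atom is removed first.
The cases `k ≤ 1` at an arbitrary centre follow by comparing total masses, since `v ≤ 1`.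
-/

open MeasureTheory ProbabilityTheory Finset
open scoped ENNReal

namespace SymmetricDomination

noncomputable def tailSum (f : ℤ → ℝ≥0∞) (k : ℕ) : ℝ≥0∞ :=
  ∑' x : ℤ, if (k : ℤ) ≤ |x| then f x else 0

def SymmDominates (G F : ℤ → ℝ≥0∞) : Prop :=
  ∀ (k : ℕ) (x₀ : ℤ), tailSum F k ≤ tailSum (fun x => G (x₀ + x)) k

noncomputable def conv (p f : ℤ → ℝ≥0∞) (x : ℤ) : ℝ≥0∞ :=
  ∑' y : ℤ, p (x - y) * f y

noncomputable def tailKernel (p : ℤ → ℝ≥0∞) (k : ℕ) (d : ℤ) : ℝ≥0∞ :=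
  tailSum (fun x => p (x - d)) k

section TailSum

lemma tailSum_zero (f : ℤ → ℝ≥0∞) : tailSum f 0 = ∑' x, f x := by
  simp [tailSum]

lemma tsum_eq_add_tailSum_one (f : ℤ → ℝ≥0∞) : ∑' x, f x = f 0 + tailSum f 1 := by
  rw [ENNReal.tsum_eq_add_tsum_ite 0, tailSum]
  congr 1
  refine tsum_congr fun x => ?_
  by_cases hx : x = 0 <;> simp [hx, Int.one_le_abs]

lemma tsum_comp_add_left (f : ℤ → ℝ≥0∞) (c : ℤ) : ∑' x, f (c + x) = ∑' x, f x :=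
  (Equiv.addLeft c).tsum_eq f

lemma tailSum_mono {f g : ℤ → ℝ≥0∞} (h : ∀ x, f x ≤ g x) (k : ℕ) : tailSum f k ≤ tailSum g k :=
  ENNReal.tsum_le_tsum fun x => by split_ifs <;> simp [h x]

lemma tailSum_congr {f g : ℤ → ℝ≥0∞} {k : ℕ} (h : ∀ x, (k : ℤ) ≤ |x| → f x = g x) :
    tailSum f k = tailSum g k :=
  tsum_congr fun x => by split_ifs with hx <;> simp [h x, hx]

lemma tailSum_comp_sub_one_add (g : ℤ → ℝ≥0∞) {k : ℕ} (hk : 1 ≤ k) :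
    tailSum (fun x => g (x - 1)) k + g (-k) = tailSum g k + g (k - 1) := by
  have shift : tailSum (fun x => g (x - 1)) k = ∑' y, if (k : ℤ) ≤ |y + 1| then g y else 0 := by
    rw [tailSum, ← (Equiv.addRight 1).tsum_eq]
    simp
  rw [shift, tailSum, ← tsum_ite_eq (-(k : ℤ)) g, ← tsum_ite_eq ((k : ℤ) - 1) g,
    ← ENNReal.tsum_add, ← ENNReal.tsum_add]
  refine tsum_congr fun y => ?_
  simp only [Int.abs_eq_natAbs]
  split_ifs <;> first | (exfalso; omega) | simp

end TailSum

section Kernel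

variable {p : ℤ → ℝ≥0∞}

lemma apply_eq_apply_natAbs (hsymm : ∀ k, p (-k) = p k) (x : ℤ) : p x = p x.natAbs := by
  rcases Int.natAbs_eq x with hx | hx
  · exact congrArg p hx
  · exact (congrArg p hx).trans (hsymm _)

lemma le_of_natAbs_lt (hsymm : ∀ k, p (-k) = p k) (hmono : ∀ k : ℤ, 1 ≤ k → p (k + 1) ≤ p k)
    (h03 : p 3 ≤ p 0) {i j : ℤ} (hij : i.natAbs < j.natAbs) (h : i ≠ 0 ∨ 3 ≤ j.natAbs) :
    p j ≤ p i := by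
  have anti : AntitoneOn (fun n : ℕ => p n) {n | 1 ≤ n} :=
    antitoneOn_nat_Ici_of_succ_le fun n hn => by exact_mod_cast hmono n (by exact_mod_cast hn)
  rw [apply_eq_apply_natAbs hsymm i, apply_eq_apply_natAbs hsymm j]
  by_cases hi : i = 0
  · subst hi
    exact (anti (show 1 ≤ 3 by norm_num) (by simp; omega) (by omega)).trans h03
  · exact anti (by simp; omega) (by simp; omega) hij.le

lemma ne_top_of_tsum_eq_one (hsum : ∑' k, p k = 1) (j : ℤ) : p j ≠ ∞ :=
  ENNReal.ne_top_of_tsum_ne_top (hsum ▸ ENNReal.one_ne_top) j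

lemma tailKernel_neg (hsymm : ∀ k, p (-k) = p k) (k : ℕ) (d : ℤ) :
    tailKernel p k (-d) = tailKernel p k d := by
  rw [tailKernel, tailSum, ← (Equiv.neg ℤ).tsum_eq]
  refine tsum_congr fun x => ?_
  simp only [Equiv.neg_apply, abs_neg, show -x - -d = -(x - d) by ring, hsymm]

lemma tailKernel_natAbs (hsymm : ∀ k, p (-k) = p k) (k : ℕ) (d : ℤ) :
    tailKernel p k d.natAbs = tailKernel p k d := by
  rcases Int.natAbs_eq d with hd | hd
  · rw [← hd]
  · rw [← tailKernel_neg hsymm, ← hd]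

lemma tailKernel_add_one_add (hsymm : ∀ k, p (-k) = p k) {k : ℕ} (hk : 1 ≤ k) (d : ℤ) :
    tailKernel p k (d + 1) + p (k + d) = tailKernel p k d + p (k - 1 - d) := by
  have step := tailSum_comp_sub_one_add (fun x => p (x - d)) hk
  rw [show -(k : ℤ) - d = -(k + d) by ring, hsymm] at step
  simpa only [tailKernel, sub_sub, add_comm (1 : ℤ) d] using step

/-- The step `d → d + 1` trades `p (k - 1 - d)` for `p (k + d)`. For `k = 2, d = 1` this is
`p 3 ≤ p 0`; for `k = 1, d = 0` it would be `p 1 ≤ p 0`, which is not assumed. -/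
lemma tailKernel_le_tailKernel_succ (hsum : ∑' k, p k = 1) (hsymm : ∀ k, p (-k) = p k)
    (hmono : ∀ k : ℤ, 1 ≤ k → p (k + 1) ≤ p k) (h03 : p 3 ≤ p 0) {k d : ℕ} (hk : 1 ≤ k)
    (h : 2 ≤ k ∨ 1 ≤ d) : tailKernel p k d ≤ tailKernel p k (d + 1 : ℕ) := by
  have hp : p (k + d) ≤ p (k - 1 - d) :=
    le_of_natAbs_lt hsymm hmono h03 (by omega) (by omega)
  have step := tailKernel_add_one_add hsymm hk d
  push_cast
  refine (ENNReal.add_le_add_iff_right (ne_top_of_tsum_eq_one hsum (k + d))).mp ?_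
  rw [step]
  gcongr

end Kernel

section LayerCake

noncomputable def layers (g : ℕ → ℝ≥0∞) : ℕ → ℝ≥0∞
  | 0 => g 0
  | j + 1 => g (j + 1) - g j

lemma sum_range_succ_layers {g : ℕ → ℝ≥0∞} (hg : Monotone g) (n : ℕ) :
    ∑ j ∈ range (n + 1), layers g j = g n := by
  induction n with
  | zero => simp [layers]
  | succ n ih => rw [sum_range_succ, ih, layers, add_tsub_cancel_of_le (hg n.le_succ)]

lemma tsum_mul_natAbs_eq_tsum_layers_mul_tailSum {g : ℕ → ℝ≥0∞} (hg : Monotone g)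
    (f : ℤ → ℝ≥0∞) : ∑' z, f z * g z.natAbs = ∑' j : ℕ, layers g j * tailSum f j := by
  have hg_tsum : ∀ z : ℤ, g z.natAbs = ∑' j : ℕ, if (j : ℤ) ≤ |z| then layers g j else 0 := by
    intro z
    rw [← sum_range_succ_layers hg, tsum_eq_sum (s := range (z.natAbs + 1))]
    · refine sum_congr rfl fun j hj => ?_
      rw [if_pos (by rw [Int.abs_eq_natAbs]; rw [mem_range] at hj; omega)]
    · intro j hj
      rw [if_neg (by rw [Int.abs_eq_natAbs]; rw [mem_range] at hj; omega)]
  simp_rw [hg_tsum, tailSum, ← ENNReal.tsum_mul_left]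
  rw [ENNReal.tsum_comm]
  refine tsum_congr fun j => tsum_congr fun z => ?_
  split_ifs <;> simp [mul_comm]

lemma tsum_mul_natAbs_le_of_tailSum_le {F G : ℤ → ℝ≥0∞} (h : ∀ j : ℕ, tailSum F j ≤ tailSum G j)
    {g : ℕ → ℝ≥0∞} (hg : Monotone g) : ∑' z, F z * g z.natAbs ≤ ∑' z, G z * g z.natAbs := by
  rw [tsum_mul_natAbs_eq_tsum_layers_mul_tailSum hg, tsum_mul_natAbs_eq_tsum_layers_mul_tailSum hg]
  exact ENNReal.tsum_le_tsum fun j => mul_le_mul_right (h j) _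

end LayerCake

section Convolution

variable {p : ℤ → ℝ≥0∞}

lemma tailSum_conv (f : ℤ → ℝ≥0∞) (k : ℕ) (c : ℤ) :
    tailSum (fun x => conv p f (c + x)) k = ∑' z, f (c + z) * tailKernel p k z := by
  have reindex : ∀ x, conv p f (c + x) = ∑' z, p (x - z) * f (c + z) := fun x => by
    rw [conv, ← tsum_comp_add_left _ c]
    simp only [add_sub_add_left_eq_sub]
  simp_rw [tailSum, reindex, tailKernel, tailSum, ← ENNReal.tsum_mul_left]
  rw [← ENNReal.tsum_comm]
  refine tsum_congr fun x => ?_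
  split_ifs <;> simp [mul_comm]

lemma tailSum_conv_le_of_symmDominates (hsum : ∑' k, p k = 1) (hsymm : ∀ k, p (-k) = p k)
    (hmono : ∀ k : ℤ, 1 ≤ k → p (k + 1) ≤ p k) (h03 : p 3 ≤ p 0) {F G : ℤ → ℝ≥0∞}
    (hdom : SymmDominates G F) {k : ℕ} (hk : 2 ≤ k) (c : ℤ) :
    tailSum (conv p F) k ≤ tailSum (fun x => conv p G (c + x)) k := by
  have mono : Monotone fun n : ℕ => tailKernel p k n :=
    monotone_nat_of_le_succ fun n =>
      tailKernel_le_tailKernel_succ hsum hsymm hmono h03 (by omega) (Or.inl hk)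
  have layered := tsum_mul_natAbs_le_of_tailSum_le (fun j => hdom j c) mono
  simp only [tailKernel_natAbs hsymm] at layered
  have hF := tailSum_conv (p := p) F k 0
  simp only [zero_add] at hF
  rwa [hF, tailSum_conv]

lemma tsum_apply_sub (hsum : ∑' k, p k = 1) (x : ℤ) : ∑' y, p (x - y) = 1 := by
  rw [← hsum]
  exact (Equiv.subLeft x).tsum_eq p

lemma conv_le_one (hsum : ∑' k, p k = 1) {f : ℤ → ℝ≥0∞} (hf : ∀ y, f y ≤ 1) (x : ℤ) :
    conv p f x ≤ 1 :=
  (ENNReal.tsum_le_tsum fun y => mul_le_of_le_one_right' (hf y)).trans_eq (tsum_apply_sub hsum x)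

lemma conv_one_sub (hsum : ∑' k, p k = 1) {u : ℤ → ℝ≥0∞} (hu : ∀ y, u y ≤ 1) (x : ℤ) :
    conv p (fun y => 1 - u y) x = 1 - conv p u x := by
  refine ENNReal.eq_sub_of_add_eq
    (ne_top_of_le_ne_top ENNReal.one_ne_top (conv_le_one hsum hu x)) ?_
  rw [conv, conv, ← ENNReal.tsum_add]
  refine (tsum_congr fun y => ?_).trans (tsum_apply_sub hsum x)
  rw [← mul_add, tsub_add_cancel_of_le (hu y), mul_one]

/-- For `k = 1` the tail kernel need not increase from `0` to `1`; the mass sitting at the trap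
(`F 0 = 1`, `G a = 1`) is removed first, which leaves a kernel that does increase. -/
lemma tailSum_one_conv_le_of_symmDominates (hsum : ∑' k, p k = 1) (hsymm : ∀ k, p (-k) = p k)
    (hmono : ∀ k : ℤ, 1 ≤ k → p (k + 1) ≤ p k) (h03 : p 3 ≤ p 0) {F G : ℤ → ℝ≥0∞}
    (hdom : SymmDominates G F) {a : ℤ} (hF : F 0 = 1) (hG : G a = 1) :
    tailSum (conv p F) 1 ≤ tailSum (fun x => conv p G (a + x)) 1 := by
  set g : ℕ → ℝ≥0∞ := fun n => if n = 0 then 0 else tailKernel p 1 n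
  have mono : Monotone g := by
    refine monotone_nat_of_le_succ fun n => ?_
    rcases n with _ | n
    · simp [g]
    · simpa [g] using
        tailKernel_le_tailKernel_succ hsum hsymm hmono h03 le_rfl (Or.inr n.succ_pos)
  have split : ∀ H : ℤ → ℝ≥0∞, H 0 = 1 →
      ∑' z, H z * tailKernel p 1 z = tailKernel p 1 0 + ∑' z, H z * g z.natAbs := by
    intro H hH
    rw [ENNReal.tsum_eq_add_tsum_ite 0, hH, one_mul]
    congr 1
    refine tsum_congr fun z => ?_
    by_cases hz : z = 0
    · simp [hz, g]
    · simp only [g, hz, if_false, Int.natAbs_eq_zero, tailKernel_natAbs hsymm]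
  have hF' := tailSum_conv (p := p) F 1 0
  simp only [zero_add] at hF'
  rw [hF', tailSum_conv, split F hF, split (fun z => G (a + z)) (by simpa using hG)]
  exact add_le_add le_rfl (tsum_mul_natAbs_le_of_tailSum_le (fun j => hdom j a) mono)

end Convolution

lemma symmDominates_of_tailSum_one_le {F G : ℤ → ℝ≥0∞} {a : ℤ} (hF : F 0 = 1) (hGa : G a = 1)
    (hG : ∀ x, G x ≤ 1) (h : tailSum F 1 ≤ tailSum (fun x => G (a + x)) 1) {k : ℕ} (hk : k ≤ 1)
    (x₀ : ℤ) : tailSum F k ≤ tailSum (fun x => G (x₀ + x)) k := by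
  have total : ∑' x, F x ≤ ∑' x, G x := calc
    ∑' x, F x = 1 + tailSum F 1 := by rw [tsum_eq_add_tailSum_one, hF]
    _ ≤ 1 + tailSum (fun x => G (a + x)) 1 := by gcongr
    _ = ∑' x, G x := by rw [← tsum_comp_add_left G a, tsum_eq_add_tailSum_one, add_zero, hGa]
  interval_cases k
  · rwa [tailSum_zero, tailSum_zero, tsum_comp_add_left]
  · refine (ENNReal.add_le_add_iff_left ENNReal.one_ne_top).mp ?_
    calc 1 + tailSum F 1 = ∑' x, F x := by rw [tsum_eq_add_tailSum_one, hF]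
      _ ≤ ∑' x, G (x₀ + x) := total.trans_eq (tsum_comp_add_left G x₀).symm
      _ = G (x₀ + 0) + tailSum (fun x => G (x₀ + x)) 1 := tsum_eq_add_tailSum_one _
      _ ≤ 1 + tailSum (fun x => G (x₀ + x)) 1 := by gcongr; exact hG _

theorem symmDominates_of_conv {p : ℤ → ℝ≥0∞} (hsum : ∑' k, p k = 1)
    (hsymm : ∀ k, p (-k) = p k) (hmono : ∀ k : ℤ, 1 ≤ k → p (k + 1) ≤ p k) (h03 : p 3 ≤ p 0)
    {F G F' G' : ℤ → ℝ≥0∞} {a : ℤ} (hdom : SymmDominates G F) (hF0 : F 0 = 1) (hGa : G a = 1)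
    (hF'0 : F' 0 = 1) (hF' : ∀ x ≠ 0, F' x = conv p F x) (hG'a : G' a = 1)
    (hG' : ∀ x, conv p G x ≤ G' x) (hG'le : ∀ x, G' x ≤ 1) : SymmDominates G' F' := by
  have tail_F' : ∀ k : ℕ, 1 ≤ k → tailSum F' k = tailSum (conv p F) k := fun k hk =>
    tailSum_congr fun x hx => hF' x (by rintro rfl; simp at hx; omega)
  have tail_G' : ∀ (k : ℕ) (c : ℤ),
      tailSum (fun x => conv p G (c + x)) k ≤ tailSum (fun x => G' (c + x)) k :=
    fun k c => tailSum_mono (fun x => hG' (c + x)) k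
  intro k x₀
  rcases le_or_gt 2 k with hk | hk
  · rw [tail_F' k (by omega)]
    exact (tailSum_conv_le_of_symmDominates hsum hsymm hmono h03 hdom hk x₀).trans (tail_G' k x₀)
  · refine symmDominates_of_tailSum_one_le hF'0 hG'a hG'le ?_ (by omega) x₀
    rw [tail_F' 1 le_rfl]
    exact (tailSum_one_conv_le_of_symmDominates hsum hsymm hmono h03 hdom hF0 hGa).trans
      (tail_G' 1 a)

section RandomWalk

open Function

variable {Ω : Type*} {ξ : ℕ → Ω → ℤ} {A : ℕ → ℤ → Prop} {m : ℕ}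

/-- The event `{Z m = x, τ̃ > m}` for the walk started at `z`, with traps `A l` at time `l`;
`killedProb` below is the paper's `v` for `A l t ↔ t = φ l ∨ t = φ (l + 1)`. -/
def survivalEvent (ξ : ℕ → Ω → ℤ) (A : ℕ → ℤ → Prop) (m : ℕ) (x z : ℤ) : Set Ω :=
  {ω | z + ∑ i ∈ range m, ξ i ω = x ∧ ∀ l ≤ m, ¬A l (z + ∑ i ∈ range l, ξ i ω)}

lemma pairwise_disjoint_survivalEvent_start (x : ℤ) :
    Pairwise (Disjoint on fun z => survivalEvent ξ A m x z) := fun _ _ hne =>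
  Set.disjoint_left.mpr fun _ h h' => hne (by linarith [h.1, h'.1])

lemma pairwise_disjoint_survivalEvent_end (z : ℤ) :
    Pairwise (Disjoint on fun y => survivalEvent ξ A m y z) := fun _ _ hne =>
  Set.disjoint_left.mpr fun _ h h' => hne (h.1.symm.trans h'.1)

lemma survivalEvent_succ {x : ℤ} (hx : ¬A (m + 1) x) (z : ℤ) :
    survivalEvent ξ A (m + 1) x z = ⋃ y, survivalEvent ξ A m y z ∩ {ω | ξ m ω = x - y} := by
  ext ω
  simp only [survivalEvent, Set.mem_iUnion, Set.mem_inter_iff, Set.mem_ofPred_eq, sum_range_succ]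
  constructor
  · rintro ⟨hend, hsafe⟩
    exact ⟨_, ⟨rfl, fun l hl => hsafe l (by omega)⟩, by omega⟩
  · rintro ⟨y, ⟨rfl, hsafe⟩, hstep⟩
    refine ⟨by omega, fun l hl => ?_⟩
    rcases Nat.lt_or_eq_of_le hl with hl | rfl
    · exact hsafe l (by omega)
    · rwa [sum_range_succ, ← add_assoc, hstep, add_sub_cancel]

lemma measurableSet_survivalEvent {m' : MeasurableSpace Ω} (hξ : ∀ i < m, Measurable[m'] (ξ i))
    (x z : ℤ) : MeasurableSet[m'] (survivalEvent ξ A m x z) := by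
  have hS : ∀ l ≤ m, Measurable[m'] fun ω => z + ∑ i ∈ range l, ξ i ω := fun l hl =>
    measurable_const.add (Finset.measurable_sum _ fun i hi => hξ i (by simp at hi; omega))
  rw [survivalEvent, Set.ofPred_and, Set.ofPred_forall]
  exact (hS m le_rfl (measurableSet_singleton x)).inter
    (MeasurableSet.iInter fun l => by
      rw [Set.ofPred_forall]
      exact MeasurableSet.iInter fun hl => hS l hl (.of_discrete (s := {t | ¬A l t})))

variable [MeasurableSpace Ω] {μ : Measure Ω}

noncomputable def survivalMass (μ : Measure Ω) (ξ : ℕ → Ω → ℤ) (A : ℕ → ℤ → Prop) (m : ℕ)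
    (x : ℤ) : ℝ≥0∞ :=
  ∑' z, μ (survivalEvent ξ A m x z)

noncomputable def killedProb (μ : Measure Ω) (ξ : ℕ → Ω → ℤ) (A : ℕ → ℤ → Prop) (m : ℕ)
    (x : ℤ) : ℝ≥0∞ :=
  1 - survivalMass μ ξ A m x

lemma survivalMass_le_one [IsProbabilityMeasure μ] (hmeas : ∀ i, Measurable (ξ i)) (x : ℤ) :
    survivalMass μ ξ A m x ≤ 1 := by
  rw [survivalMass, ← measure_iUnion (pairwise_disjoint_survivalEvent_start x)
    fun z => measurableSet_survivalEvent (fun i _ => hmeas i) x z]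
  exact prob_le_one

/-- The path up to time `m` is independent of the increment `ξ m`. -/
lemma measure_survivalEvent_inter [IsProbabilityMeasure μ] (hmeas : ∀ i, Measurable (ξ i))
    (hindep : iIndepFun ξ μ) (y z t : ℤ) :
    μ (survivalEvent ξ A m y z ∩ {ω | ξ m ω = t}) =
      μ (survivalEvent ξ A m y z) * μ {ω | ξ m ω = t} := by
  have hind := indep_iSup_of_disjoint (fun i => (hmeas i).comap_le)
    ((iIndepFun_iff_iIndep _ _ _).mp hindep) (S := Set.Iio m) (T := {m}) (by simp)
  refine (Indep_iff _ _ _).mp hind _ _ ?_ ?_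
  · exact measurableSet_survivalEvent (fun i hi => Measurable.of_comap_le
      (le_iSup₂ (f := fun i (_ : i ∈ Set.Iio m) => MeasurableSpace.comap (ξ i) _) i hi)) y z
  · exact Measurable.of_comap_le (le_iSup₂ (f := fun i (_ : i ∈ ({m} : Set ℕ)) =>
      MeasurableSpace.comap (ξ i) _) m rfl) (measurableSet_singleton t)

lemma survivalMass_succ [IsProbabilityMeasure μ] (hmeas : ∀ i, Measurable (ξ i))
    (hindep : iIndepFun ξ μ) {p : ℤ → ℝ≥0∞} (hlaw : ∀ i k, μ {ω | ξ i ω = k} = p k) {x : ℤ}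
    (hx : ¬A (m + 1) x) : survivalMass μ ξ A (m + 1) x = conv p (survivalMass μ ξ A m) x := by
  calc survivalMass μ ξ A (m + 1) x
      = ∑' z, ∑' y, μ (survivalEvent ξ A m y z ∩ {ω | ξ m ω = x - y}) := by
        refine tsum_congr fun z => ?_
        rw [survivalEvent_succ hx, measure_iUnion
          (fun _ _ h => ((pairwise_disjoint_survivalEvent_end z) h).mono
            Set.inter_subset_left Set.inter_subset_left)
          fun y => (measurableSet_survivalEvent (fun i _ => hmeas i) y z).inter
            (measurableSet_eq_fun (hmeas m) measurable_const)]
    _ = conv p (survivalMass μ ξ A m) x := by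
        simp_rw [measure_survivalEvent_inter hmeas hindep, hlaw, conv, survivalMass,
          ← ENNReal.tsum_mul_left, mul_comm (p _)]
        exact ENNReal.tsum_comm

lemma killedProb_le_one (x : ℤ) : killedProb μ ξ A m x ≤ 1 := tsub_le_self

lemma killedProb_eq_one {x : ℤ} (hx : A m x) : killedProb μ ξ A m x = 1 := by
  have empty : ∀ z, survivalEvent ξ A m x z = ∅ := fun z =>
    Set.eq_empty_of_forall_notMem fun _ h => h.2 m le_rfl (h.1 ▸ hx)
  simp [killedProb, survivalMass, empty]

lemma killedProb_succ [IsProbabilityMeasure μ] (hmeas : ∀ i, Measurable (ξ i))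
    (hindep : iIndepFun ξ μ) {p : ℤ → ℝ≥0∞} (hsum : ∑' k, p k = 1)
    (hlaw : ∀ i k, μ {ω | ξ i ω = k} = p k) {x : ℤ} (hx : ¬A (m + 1) x) :
    killedProb μ ξ A (m + 1) x = conv p (killedProb μ ξ A m) x := by
  rw [killedProb, survivalMass_succ hmeas hindep hlaw hx,
    ← conv_one_sub hsum (survivalMass_le_one hmeas)]
  rfl

lemma conv_killedProb_le [IsProbabilityMeasure μ] (hmeas : ∀ i, Measurable (ξ i))
    (hindep : iIndepFun ξ μ) {p : ℤ → ℝ≥0∞} (hsum : ∑' k, p k = 1)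
    (hlaw : ∀ i k, μ {ω | ξ i ω = k} = p k) (x : ℤ) :
    conv p (killedProb μ ξ A m) x ≤ killedProb μ ξ A (m + 1) x := by
  by_cases hx : A (m + 1) x
  · rw [killedProb_eq_one hx]
    exact conv_le_one hsum (fun _ => killedProb_le_one _) x
  · rw [killedProb_succ hmeas hindep hsum hlaw hx]

end RandomWalk

end SymmetricDomination

open SymmetricDomination

/-- **Induction step for symmetric domination.**  `p` is a symmetric probability
distribution on `ℤ` with `p k ≥ p (k+1)` for `k ≥ 1` and `p 0 ≥ p 3`.  For the random
walk `Z m = z + ξ 0 + ⋯ + ξ (m-1)` started at `z`, and the trap path `φ` (resp. the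
constant trap path `0`), `v n x = 1 - ∑_z P_z(Z n = x, τ̃_φ > n)` (resp. `v0 n x`), where
`τ̃_φ > n` is the event that `Z m ∉ {φ m, φ (m+1)}` for all `m ≤ n`.  If `v n`
symmetrically dominates `v0 n`, i.e. `∑_{|x| ≥ k} v0 n x ≤ ∑_{|x| ≥ k} v n (x₀ + x)` for
all `k ≥ 0` and `x₀ ∈ ℤ`, then `v (n+1)` symmetrically dominates `v0 (n+1)`. -/
theorem symmetric_domination_step
    (p : ℤ → ℝ≥0∞) (hsum : ∑' k : ℤ, p k = 1)
    (hsymm : ∀ k : ℤ, p (-k) = p k)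
    (hmono : ∀ k : ℤ, 1 ≤ k → p (k + 1) ≤ p k)
    (h03 : p 3 ≤ p 0)
    {Ω : Type*} [MeasurableSpace Ω] (μ : Measure Ω) [IsProbabilityMeasure μ]
    (ξ : ℕ → Ω → ℤ)
    (hmeas : ∀ i, Measurable (ξ i))
    (hindep : iIndepFun ξ μ)
    (hlaw : ∀ i k, μ {ω | ξ i ω = k} = p k)
    (φ : ℕ → ℤ)
    (v v0 : ℕ → ℤ → ℝ≥0∞)
    (hv : ∀ m x, v m x = 1 - ∑' z : ℤ, μ {ω |
      z + ∑ i ∈ Finset.range m, ξ i ω = x ∧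
      ∀ l ≤ m, ¬(z + ∑ i ∈ Finset.range l, ξ i ω = φ l ∨
                 z + ∑ i ∈ Finset.range l, ξ i ω = φ (l + 1))})
    (hv0 : ∀ m x, v0 m x = 1 - ∑' z : ℤ, μ {ω |
      z + ∑ i ∈ Finset.range m, ξ i ω = x ∧
      ∀ l ≤ m, ¬(z + ∑ i ∈ Finset.range l, ξ i ω = 0)})
    (n : ℕ)
    (hdom : ∀ (k : ℕ) (x₀ : ℤ),
      (∑' x : ℤ, if (k : ℤ) ≤ |x| then v0 n x else 0) ≤
        ∑' x : ℤ, if (k : ℤ) ≤ |x| then v n (x₀ + x) else 0) :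
    ∀ (k : ℕ) (x₀ : ℤ),
      (∑' x : ℤ, if (k : ℤ) ≤ |x| then v0 (n + 1) x else 0) ≤
        ∑' x : ℤ, if (k : ℤ) ≤ |x| then v (n + 1) (x₀ + x) else 0 := by
  obtain rfl : v = killedProb μ ξ (fun l t => t = φ l ∨ t = φ (l + 1)) := funext₂ hv
  obtain rfl : v0 = killedProb μ ξ (fun _ t => t = 0) := funext₂ hv0
  exact symmDominates_of_conv hsum hsymm hmono h03 (a := φ (n + 1)) hdom
    (killedProb_eq_one rfl) (killedProb_eq_one (Or.inr rfl)) (killedProb_eq_one rfl)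
    (fun _ hx => killedProb_succ hmeas hindep hsum hlaw hx) (killedProb_eq_one (Or.inl rfl))
    (conv_killedProb_le hmeas hindep hsum hlaw) killedProb_le_one
end

section
/- Let $p(\cdot)$ be a symmetric probability distribution on $\mathbb{Z}$ satisfying $p(k)\geq p(k+1)$ for all $k\geq 1$ and $p(0)\geq p(3)$. Fix a sequence $\phi=(\phi_i)_{i\geq 0}$ in $\mathbb{Z}$, and for $n\geq 0$, $x\in\mathbb{Z}$ define $v^\phi_n(x):=1-\sum_{z\in\mathbb{Z}}\mathbb{P}^Z_z(Z_n=x,\ \tilde\tau_\phi>n)$, where $\mathbb{P}^Z_z$ is the law of the random walk with increments of law $p$ started at $z$ and $\tilde\tau_\phi:=\min\{m\geq 0: Z_m=\phi_m \text{ or } Z_m=\phi_{m+1}\}$; let $v^0_n$ denote the case $\phi\equiv 0$. Then for every $n\geq 0$, every integer $k\geq 0$ and every $x_0\in\mathbb{Z}$: $\sum_{|x|\geq k} v^0_n(x)\leq\sum_{|x|\geq k} v^\phi_n(x_0+x)$. -/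
/-!
Let `D_m` be the death profile: `D_{m+1} = 1` on the traps of time `m + 1` and `p ⋆ D_m`
elsewhere. We prove by induction on `m` the stronger statement that for every radius `k` and
every centre `c`, the mass of `D⁰_m` at distance `≥ k` from `0` is at most the mass of `Dᵠ_m` at
distance `≥ k` from `c`.

The mass of `p ⋆ h` at distance `≥ k` from `c` is `∑ y, h y * T_k (c - y)`, where `T_k d` is
the mass of `p` at distance `≥ k` from `d`. For `k ≥ 2` the hypotheses on `p` make `T_k` a
nondecreasing function of `|d|` (`p 0 ≥ p 3` is needed when the site leaving the tail is `0`),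
and summation by parts turns domination of all tails into domination of such weighted sums.
For `k ≤ 1` one compares total masses instead, using that the two profiles equal `1` at `0`
and at `φ (m + 1)` respectively, which are traps at both times `m` and `m + 1`.
-/

open MeasureTheory ProbabilityTheory Finset
open scoped ENNReal

namespace Pascal

noncomputable section
open scoped Classical

def conv (p f : ℤ → ℝ≥0∞) (x : ℤ) : ℝ≥0∞ := ∑' y, p (x - y) * f y

def tailMass (f : ℤ → ℝ≥0∞) (k : ℕ) (c : ℤ) : ℝ≥0∞ :=
  ∑' x, if k ≤ (x - c).natAbs then f x else 0

section tailMass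

variable (f : ℤ → ℝ≥0∞) (c : ℤ)

lemma tailMass_zero : tailMass f 0 c = ∑' x, f x := by
  simp [tailMass]

lemma add_tailMass_one : f c + tailMass f 1 c = ∑' x, f x := by
  rw [ENNReal.tsum_eq_add_tsum_ite c, tailMass]
  congr 1
  refine tsum_congr fun x => ?_
  by_cases hx : x = c <;> simp [hx, sub_eq_zero]

lemma tailMass_eq_tsum_shift (k : ℕ) :
    tailMass f k c = ∑' x, if (k : ℤ) ≤ |x| then f (c + x) else 0 := by
  rw [tailMass, ← (Equiv.addLeft c).tsum_eq]
  refine tsum_congr fun x => ?_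
  simp only [Equiv.coe_addLeft, add_sub_cancel_left, Int.abs_eq_natAbs, Nat.cast_le]

variable {f c}

lemma tailMass_mono {g : ℤ → ℝ≥0∞} (hfg : f ≤ g) (k : ℕ) : tailMass f k c ≤ tailMass g k c :=
  ENNReal.tsum_le_tsum fun x => by split_ifs <;> simp [hfg x]

lemma tailMass_congr {g : ℤ → ℝ≥0∞} {k : ℕ} (hfg : ∀ x, k ≤ (x - c).natAbs → f x = g x) :
    tailMass f k c = tailMass g k c :=
  tsum_congr fun x => by split_ifs with hx <;> simp [hfg x, hx]

lemma tailMass_add_eq_tailMass_succ_add {k : ℕ} (hk : 1 ≤ k) :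
    tailMass f k c + f (c + 1 - k) = tailMass f k (c + 1) + f (c + k) := by
  rw [← tsum_ite_eq (c + 1 - k) f, ← tsum_ite_eq (c + k) f, tailMass,
    tailMass, ← ENNReal.tsum_add, ← ENNReal.tsum_add]
  refine tsum_congr fun x => ?_
  split_ifs <;> first | (exfalso; omega) | simp_all

lemma tailMass_le_tailMass_succ {k : ℕ} (hk : 1 ≤ k) (hle : f (c + k) ≤ f (c + 1 - k))
    (hfin : f (c + 1 - k) ≠ ∞) : tailMass f k c ≤ tailMass f k (c + 1) :=
  (ENNReal.add_le_add_iff_right hfin).1 <|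
    (tailMass_add_eq_tailMass_succ_add hk).trans_le (by gcongr)

end tailMass

section LayerCake

variable {W : ℕ → ℝ≥0∞}

lemma eq_add_tsum_increments (hW : Monotone W) (n : ℕ) :
    W n = W 0 + ∑' j : ℕ, if j + 1 ≤ n then W (j + 1) - W j else 0 := by
  rw [tsum_eq_sum (s := range n) fun j hj => if_neg (by simpa using hj),
    sum_congr rfl fun j hj => if_pos (by simpa using hj)]
  induction n with
  | zero => simp
  | succ n ih => rw [sum_range_succ, ← add_assoc, ← ih, add_tsub_cancel_of_le (hW n.le_succ)]

lemma tsum_mul_weight_eq (hW : Monotone W) (h : ℤ → ℝ≥0∞) (c : ℤ) :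
    ∑' y, h y * W (y - c).natAbs =
      W 0 * tailMass h 0 c + ∑' j : ℕ, (W (j + 1) - W j) * tailMass h (j + 1) c := by
  simp only [tailMass, Nat.zero_le, if_true, ← ENNReal.tsum_mul_left]
  rw [ENNReal.tsum_comm (f := fun j y => _), ← ENNReal.tsum_add]
  refine tsum_congr fun y => ?_
  rw [eq_add_tsum_increments hW, mul_add, mul_comm, ← ENNReal.tsum_mul_left]
  congr 1
  exact tsum_congr fun j => by split_ifs <;> simp [mul_comm]

lemma tsum_mul_weight_le (hW : Monotone W) {f g : ℤ → ℝ≥0∞} {a b : ℤ}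
    (hfg : ∀ k, tailMass f k a ≤ tailMass g k b) :
    ∑' y, f y * W (y - a).natAbs ≤ ∑' y, g y * W (y - b).natAbs := by
  rw [tsum_mul_weight_eq hW, tsum_mul_weight_eq hW]
  gcongr with j
  · exact hfg 0
  · exact hfg (j + 1)

end LayerCake

lemma tailMass_conv (p h : ℤ → ℝ≥0∞) (k : ℕ) (c : ℤ) :
    tailMass (conv p h) k c = ∑' y, h y * tailMass p k (c - y) :=
  calc tailMass (conv p h) k c
      = ∑' x, ∑' y, if k ≤ (x - c).natAbs then p (x - y) * h y else 0 :=
        tsum_congr fun x => by split_ifs <;> simp [conv]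
    _ = ∑' y, ∑' x, if k ≤ (x - c).natAbs then p (x - y) * h y else 0 := ENNReal.tsum_comm
    _ = ∑' y, h y * tailMass p k (c - y) := tsum_congr fun y => by
        rw [tailMass, ← ENNReal.tsum_mul_left, ← (Equiv.addRight y).tsum_eq]
        refine tsum_congr fun x => ?_
        simp only [Equiv.coe_addRight, add_sub_cancel_right, show x + y - c = x - (c - y) by ring]
        split_ifs <;> simp [mul_comm]

section Increments

variable {p : ℤ → ℝ≥0∞}

lemma le_one_of_tsum_eq_one (hsum : ∑' k, p k = 1) (a : ℤ) : p a ≤ 1 :=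
  hsum ▸ ENNReal.le_tsum a

lemma ne_top_of_tsum_eq_one (hsum : ∑' k, p k = 1) (a : ℤ) : p a ≠ ∞ :=
  ((le_one_of_tsum_eq_one hsum a).trans_lt ENNReal.one_lt_top).ne

lemma tsum_sub_left_eq_one (hsum : ∑' k, p k = 1) (x : ℤ) : ∑' y, p (x - y) = 1 :=
  ((Equiv.subLeft x).tsum_eq p).trans hsum

lemma conv_le_one (hsum : ∑' k, p k = 1) {f : ℤ → ℝ≥0∞} (hf : ∀ y, f y ≤ 1) (x : ℤ) :
    conv p f x ≤ 1 :=
  calc conv p f x ≤ ∑' y, p (x - y) := ENNReal.tsum_le_tsum fun y => mul_le_of_le_one_right' (hf y)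
    _ = 1 := tsum_sub_left_eq_one hsum x

lemma tsum_mul_one_sub (hsum : ∑' k, p k = 1) {f : ℤ → ℝ≥0∞} (hf : ∀ y, f y ≤ 1) (x : ℤ) :
    ∑' y, p (x - y) * (1 - f y) = 1 - conv p f x := by
  refine ENNReal.eq_sub_of_add_eq (conv_le_one hsum hf x |>.trans_lt ENNReal.one_lt_top).ne ?_
  rw [conv, ← ENNReal.tsum_add]
  refine (tsum_congr fun y => ?_).trans (tsum_sub_left_eq_one hsum x)
  rw [← mul_add, tsub_add_cancel_of_le (hf y), mul_one]

lemma apply_le_apply_of_natAbs_le (hsymm : ∀ k, p (-k) = p k)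
    (hmono : ∀ k : ℤ, 1 ≤ k → p (k + 1) ≤ p k) {a b : ℤ} (ha : 1 ≤ a.natAbs)
    (hab : a.natAbs ≤ b.natAbs) : p b ≤ p a := by
  have hp : ∀ c : ℤ, p c = p c.natAbs := fun c => by
    rcases Int.natAbs_eq c with h | h <;> rw [h] <;> simp [hsymm]
  have hanti : Antitone fun n : ℕ => p (n + 1) :=
    antitone_nat_of_succ_le fun n => by exact_mod_cast hmono (n + 1) (by omega)
  have hshift : ∀ c : ℤ, 1 ≤ c.natAbs → p c = p ((c.natAbs - 1 : ℕ) + 1) := fun c hc => by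
    rw [hp c]; congr 1; omega
  rw [hshift a ha, hshift b (ha.trans hab)]
  exact hanti (Nat.sub_le_sub_right hab 1)

lemma tailMass_neg (hsymm : ∀ k, p (-k) = p k) (k : ℕ) (d : ℤ) :
    tailMass p k (-d) = tailMass p k d := by
  rw [tailMass, ← (Equiv.neg ℤ).tsum_eq]
  refine tsum_congr fun x => ?_
  simp only [Equiv.neg_apply, hsymm, show -x - -d = -(x - d) by ring, Int.natAbs_neg]

lemma tailMass_natAbs (hsymm : ∀ k, p (-k) = p k) (k : ℕ) (d : ℤ) :
    tailMass p k d.natAbs = tailMass p k d := by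
  rcases Int.natAbs_eq d with h | h
  · rw [← h]
  · rw [h, tailMass_neg hsymm, Int.natAbs_neg, Int.natAbs_natCast]

lemma tailMass_conv_le (hsum : ∑' k, p k = 1) (hsymm : ∀ k, p (-k) = p k)
    (hmono : ∀ k : ℤ, 1 ≤ k → p (k + 1) ≤ p k) (h03 : p 3 ≤ p 0) {f g : ℤ → ℝ≥0∞} {a b : ℤ}
    (hfg : ∀ j, tailMass f j a ≤ tailMass g j b) {k : ℕ} (hk : 2 ≤ k) :
    tailMass (conv p f) k a ≤ tailMass (conv p g) k b := by
  set W : ℕ → ℝ≥0∞ := fun j => tailMass p k j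
  have hW : Monotone W := monotone_nat_of_le_succ fun j => by
    simp only [W, Nat.cast_succ]
    refine tailMass_le_tailMass_succ (by omega) ?_ (ne_top_of_tsum_eq_one hsum _)
    by_cases hj : (j : ℤ) + 1 - k = 0
    · rw [hj]
      exact (apply_le_apply_of_natAbs_le hsymm hmono (a := 3) (by decide) (by omega)).trans h03
    · exact apply_le_apply_of_natAbs_le hsymm hmono (by omega) (by omega)
  have hweight : ∀ (h : ℤ → ℝ≥0∞) (c : ℤ),
      tailMass (conv p h) k c = ∑' y, h y * W (y - c).natAbs := fun h c => by
    rw [tailMass_conv]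
    refine tsum_congr fun y => ?_
    rw [← tailMass_natAbs hsymm, show (c - y).natAbs = (y - c).natAbs by omega]
  rw [hweight, hweight]
  exact tsum_mul_weight_le hW hfg

lemma tailMass_one_conv_le (hsum : ∑' k, p k = 1) (hsymm : ∀ k, p (-k) = p k)
    (hmono : ∀ k : ℤ, 1 ≤ k → p (k + 1) ≤ p k) {f g : ℤ → ℝ≥0∞} {a b : ℤ}
    (hfa : f a = 1) (hgb : g b = 1) (hfg : ∀ j, tailMass f j a ≤ tailMass g j b) :
    tailMass (conv p f) 1 a ≤ tailMass (conv p g) 1 b := by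
  -- `T = 1 - p` may decrease from `0` to `±1`: `W` is its monotone part, and the excess `α` at
  -- `0` is paid equally on both sides because `f a = g b = 1`.
  set T : ℤ → ℝ≥0∞ := tailMass p 1
  set W : ℕ → ℝ≥0∞ := fun j => if j = 0 then min (T 0) (T 1) else T j
  set α := T 0 - min (T 0) (T 1)
  have hW : Monotone W := monotone_nat_of_le_succ fun j => by
    rcases j with _ | j
    · simp [W]
    · simp only [W, Nat.add_one_ne_zero, if_false, Nat.cast_succ]
      refine tailMass_le_tailMass_succ le_rfl ?_ (ne_top_of_tsum_eq_one hsum _)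
      simpa using hmono (j + 1) (by omega)
  have hT : ∀ d, T d = W d.natAbs + if d = 0 then α else 0 := fun d => by
    by_cases hd : d = 0
    · simp [hd, W, α, add_tsub_cancel_of_le]
    · simp only [hd, W, T, if_false, add_zero, Int.natAbs_eq_zero, tailMass_natAbs hsymm]
  have hweight : ∀ (h : ℤ → ℝ≥0∞) (c : ℤ), h c = 1 →
      tailMass (conv p h) 1 c = ∑' y, h y * W (y - c).natAbs + α := fun h c hc => by
    rw [tailMass_conv]
    simp only [T] at hT
    simp only [hT, mul_add, show ∀ y, (c - y).natAbs = (y - c).natAbs from fun y => by omega]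
    rw [ENNReal.tsum_add, tsum_eq_single c (f := fun y => h y * if c - y = 0 then α else 0)
      fun y hy => by simp [sub_eq_zero, Ne.symm hy]]
    simp [hc]
  rw [hweight f a hfa, hweight g b hgb]
  exact add_le_add_left (tsum_mul_weight_le hW hfg) α

end Increments

/-- The paper's `v_m(x)`, computed by reading the walk backwards from `(m + 1, x)`: either `x` is
a trap at time `m + 1`, or the walk was at `y` at time `m` with probability `p (x - y)`. -/
def deathProb (p : ℤ → ℝ≥0∞) (Tr : ℕ → ℤ → Prop) : ℕ → ℤ → ℝ≥0∞
  | 0 => fun x => if Tr 0 x then 1 else 0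
  | m + 1 => fun x => if Tr (m + 1) x then 1 else conv p (deathProb p Tr m) x

section deathProb

variable {p : ℤ → ℝ≥0∞} {Tr : ℕ → ℤ → Prop}

lemma deathProb_of_trap {m : ℕ} {x : ℤ} (h : Tr m x) : deathProb p Tr m x = 1 := by
  cases m <;> simp [deathProb, h]

lemma deathProb_succ_of_not_trap {m : ℕ} {x : ℤ} (h : ¬ Tr (m + 1) x) :
    deathProb p Tr (m + 1) x = conv p (deathProb p Tr m) x := by
  simp [deathProb, h]

lemma deathProb_le_one (hsum : ∑' k, p k = 1) (m : ℕ) (x : ℤ) : deathProb p Tr m x ≤ 1 := by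
  induction m generalizing x with
  | zero => simp only [deathProb]; split_ifs <;> simp
  | succ m ih => simp only [deathProb]; split_ifs; exacts [le_rfl, conv_le_one hsum ih x]

lemma conv_le_deathProb_succ (hsum : ∑' k, p k = 1) (m : ℕ) :
    conv p (deathProb p Tr m) ≤ deathProb p Tr (m + 1) := fun x => by
  by_cases h : Tr (m + 1) x
  · rw [deathProb_of_trap h]; exact conv_le_one hsum (deathProb_le_one hsum m) x
  · rw [deathProb_succ_of_not_trap h]

end deathProb

lemma tsum_le_tsum_of_tailMass_one_le {f g : ℤ → ℝ≥0∞} {a b : ℤ} (hfa : f a = 1) (hgb : g b = 1)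
    (h : tailMass f 1 a ≤ tailMass g 1 b) : ∑' x, f x ≤ ∑' x, g x := by
  rw [← add_tailMass_one f a, ← add_tailMass_one g b, hfa, hgb]
  gcongr

lemma tailMass_one_le_of_tsum_le {f g : ℤ → ℝ≥0∞} {a : ℤ} (hfa : f a = 1) (hg : ∀ x, g x ≤ 1)
    (h : ∑' x, f x ≤ ∑' x, g x) (c : ℤ) : tailMass f 1 a ≤ tailMass g 1 c := by
  rw [← add_tailMass_one f a, ← add_tailMass_one g c, hfa] at h
  exact (ENNReal.add_le_add_iff_left ENNReal.one_ne_top).1 (h.trans (by gcongr; exact hg c))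

theorem tailMass_deathProb_le {p : ℤ → ℝ≥0∞} (hsum : ∑' k, p k = 1) (hsymm : ∀ k, p (-k) = p k)
    (hmono : ∀ k : ℤ, 1 ≤ k → p (k + 1) ≤ p k) (h03 : p 3 ≤ p 0) (φ : ℕ → ℤ) (m k : ℕ) (c : ℤ) :
    tailMass (deathProb p (fun _ x => x = 0) m) k 0 ≤
      tailMass (deathProb p (fun l x => x = φ l ∨ x = φ (l + 1)) m) k c := by
  set D₀ := deathProb p (fun _ x => x = 0)
  set D := deathProb p (fun l x => x = φ l ∨ x = φ (l + 1))
  induction m generalizing k c with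
  | zero =>
    rcases k with _ | k
    · rw [tailMass_zero, tailMass_zero]
      calc ∑' x, D₀ 0 x = D₀ 0 0 := tsum_eq_single 0 fun x hx => by simp [D₀, deathProb, hx]
        _ = 1 := deathProb_of_trap rfl
        _ = D 0 (φ 0) := (deathProb_of_trap (Or.inl rfl)).symm
        _ ≤ ∑' x, D 0 x := ENNReal.le_tsum (φ 0)
    · refine (ENNReal.tsum_eq_zero.2 fun x => ?_).trans_le bot_le
      split_ifs with hx
      · simp only [D₀, deathProb]; rw [if_neg (by omega)]
      · rfl
  | succ m ih =>
    have hD₀ : ∀ k, 1 ≤ k → tailMass (D₀ (m + 1)) k 0 = tailMass (conv p (D₀ m)) k 0 :=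
      fun k hk => tailMass_congr fun x hx => deathProb_succ_of_not_trap (by omega)
    have hD : ∀ k c, tailMass (conv p (D m)) k c ≤ tailMass (D (m + 1)) k c :=
      fun k c => tailMass_mono (conv_le_deathProb_succ hsum m) k
    have htot : ∑' x, D₀ (m + 1) x ≤ ∑' x, D (m + 1) x :=
      tsum_le_tsum_of_tailMass_one_le (deathProb_of_trap rfl) (deathProb_of_trap (Or.inl rfl)) <|
        (hD₀ 1 le_rfl).trans_le <| (tailMass_one_conv_le hsum hsymm hmono (deathProb_of_trap rfl)
          (deathProb_of_trap (Or.inr rfl)) fun j => ih j _).trans (hD 1 _)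
    rcases k with _ | _ | k
    · simpa only [tailMass_zero] using htot
    · exact tailMass_one_le_of_tsum_le (deathProb_of_trap rfl) (deathProb_le_one hsum _) htot c
    · rw [hD₀ _ (by omega)]
      exact (tailMass_conv_le hsum hsymm hmono h03 (fun j => ih j c) (by omega)).trans (hD _ _)

section Survival

variable {Ω : Type*}

def survivalEvent (ξ : ℕ → Ω → ℤ) (Tr : ℕ → ℤ → Prop) (m : ℕ) (z x : ℤ) : Set Ω :=
  {ω | z + ∑ i ∈ range m, ξ i ω = x ∧ ∀ l ≤ m, ¬ Tr l (z + ∑ i ∈ range l, ξ i ω)}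

lemma measurableSet_survivalEvent {m' : MeasurableSpace Ω} {ξ : ℕ → Ω → ℤ}
    {Tr : ℕ → ℤ → Prop} {m : ℕ} (hξ : ∀ i < m, Measurable[m'] (ξ i)) (z x : ℤ) :
    MeasurableSet[m'] (survivalEvent ξ Tr m z x) := by
  have hsum : ∀ l ≤ m, Measurable[m'] fun ω => z + ∑ i ∈ range l, ξ i ω := fun l hl =>
    measurable_const.add (Finset.measurable_sum _ fun i hi => hξ i (by simp at hi; omega))
  simp only [survivalEvent, Set.ofPred_and, Set.ofPred_forall]
  refine (hsum m le_rfl (measurableSet_singleton x)).inter ?_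
  exact MeasurableSet.iInter fun l => MeasurableSet.iInter fun hl =>
    hsum l hl (MeasurableSet.of_discrete (s := {y | ¬ Tr l y}))

lemma survivalEvent_succ (ξ : ℕ → Ω → ℤ) (Tr : ℕ → ℤ → Prop) (m : ℕ) (z x : ℤ) :
    survivalEvent ξ Tr (m + 1) z x =
      if Tr (m + 1) x then ∅ else ⋃ a, survivalEvent ξ Tr m z (x - a) ∩ ξ m ⁻¹' {a} := by
  split_ifs with hx
  · ext ω
    simp only [survivalEvent, Set.mem_ofPred_eq, Set.mem_empty_iff_false, iff_false, not_and]
    intro h hsurv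
    exact hsurv (m + 1) le_rfl (h ▸ hx)
  · ext ω
    simp only [survivalEvent, Set.mem_ofPred_eq, Set.mem_iUnion, Set.mem_inter_iff,
      Set.mem_preimage, Set.mem_singleton_iff, sum_range_succ, exists_eq_right', Nat.le_succ_iff]
    constructor
    · rintro ⟨h, hsurv⟩
      exact ⟨by omega, fun l hl => hsurv l (Or.inl hl)⟩
    · rintro ⟨h, hsurv⟩
      refine ⟨by omega, fun l hl => ?_⟩
      rcases hl with hl | rfl
      · exact hsurv l hl
      · rwa [sum_range_succ, show z + (∑ i ∈ range m, ξ i ω + ξ m ω) = x by omega]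

variable [MeasurableSpace Ω] {p : ℤ → ℝ≥0∞}

lemma indep_iSup_comap_Iio {μ : Measure Ω} {ξ : ℕ → Ω → ℤ} (hmeas : ∀ i, Measurable (ξ i))
    (hindep : iIndepFun ξ μ) (m : ℕ) :
    Indep (⨆ i ∈ Set.Iio m, MeasurableSpace.comap (ξ i) inferInstance)
      (MeasurableSpace.comap (ξ m) inferInstance) μ := by
  have := indep_iSup_of_disjoint (fun i => (hmeas i).comap_le) hindep
    (S := Set.Iio m) (T := {m}) (by simp)
  rwa [_root_.iSup_singleton] at this

lemma measure_survivalEvent_succ {μ : Measure Ω} {ξ : ℕ → Ω → ℤ} (hmeas : ∀ i, Measurable (ξ i))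
    (hindep : iIndepFun ξ μ) (hlaw : ∀ i k, μ {ω | ξ i ω = k} = p k)
    (Tr : ℕ → ℤ → Prop) (m : ℕ) (z x : ℤ) :
    μ (survivalEvent ξ Tr (m + 1) z x) =
      if Tr (m + 1) x then 0 else ∑' a, p a * μ (survivalEvent ξ Tr m z (x - a)) := by
  rw [survivalEvent_succ]
  split_ifs with hx
  · exact measure_empty
  have hpast : ∀ y, MeasurableSet[⨆ i ∈ Set.Iio m, MeasurableSpace.comap (ξ i) inferInstance]
      (survivalEvent ξ Tr m z y) := fun y =>
    measurableSet_survivalEvent (fun i hi => Measurable.of_comap_le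
      (le_biSup (fun i => MeasurableSpace.comap (ξ i) inferInstance) hi)) z y
  rw [measure_iUnion]
  · refine tsum_congr fun a => ?_
    rw [(Indep_iff _ _ μ).1 (indep_iSup_comap_Iio hmeas hindep m) _ _ (hpast (x - a))
      ⟨{a}, measurableSet_singleton a, rfl⟩]
    rw [← hlaw m a, mul_comm]
    rfl
  · intro a b hab
    exact ((Set.disjoint_singleton.2 hab).preimage (ξ m)).mono Set.inter_subset_right
      Set.inter_subset_right
  · exact fun a => (measurableSet_survivalEvent (fun i _ => hmeas i) z _).inter
      (hmeas m (measurableSet_singleton a))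

lemma measure_survivalEvent_zero (μ : Measure Ω) [IsProbabilityMeasure μ] (ξ : ℕ → Ω → ℤ)
    (Tr : ℕ → ℤ → Prop) (z x : ℤ) :
    μ (survivalEvent ξ Tr 0 z x) = if z = x ∧ ¬ Tr 0 z then 1 else 0 := by
  have : survivalEvent ξ Tr 0 z x = if z = x ∧ ¬ Tr 0 z then Set.univ else ∅ := by
    ext ω
    simp [survivalEvent]
  split_ifs at this ⊢ <;> simp [this]

lemma tsum_measure_survivalEvent (μ : Measure Ω) [IsProbabilityMeasure μ] {ξ : ℕ → Ω → ℤ}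
    (hsum : ∑' k, p k = 1) (hmeas : ∀ i, Measurable (ξ i)) (hindep : iIndepFun ξ μ)
    (hlaw : ∀ i k, μ {ω | ξ i ω = k} = p k) (Tr : ℕ → ℤ → Prop) (m : ℕ) (x : ℤ) :
    ∑' z, μ (survivalEvent ξ Tr m z x) = 1 - deathProb p Tr m x := by
  induction m generalizing x with
  | zero =>
    simp only [measure_survivalEvent_zero, deathProb]
    rw [tsum_eq_single x fun z hz => if_neg fun h => hz h.1]
    by_cases h : Tr 0 x <;> simp [h]
  | succ m ih =>
    simp only [measure_survivalEvent_succ hmeas hindep hlaw, deathProb]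
    by_cases h : Tr (m + 1) x
    · simp [h]
    simp only [h, if_false]
    rw [ENNReal.tsum_comm, ← tsum_mul_one_sub hsum (deathProb_le_one hsum m) x,
      ← (Equiv.subLeft x).tsum_eq]
    refine tsum_congr fun y => ?_
    rw [ENNReal.tsum_mul_left, Equiv.subLeft_apply, sub_sub_cancel, ih]

end Survival

end

end Pascal

/-- **Symmetric domination at all times.**  `p` is a symmetric probability distribution
on `ℤ` with `p k ≥ p (k+1)` for `k ≥ 1` and `p 0 ≥ p 3`.  For the random walk
`Z m = z + ξ 0 + ⋯ + ξ (m-1)` started at `z`, and the trap path `φ` (resp. the constant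
trap path `0`), `v n x = 1 - ∑_z P_z(Z n = x, τ̃_φ > n)` (resp. `v0 n x`), where
`τ̃_φ > n` is the event that `Z m ∉ {φ m, φ (m+1)}` for all `m ≤ n`.  Then for every
`n`, every `k ≥ 0` and every `x₀ ∈ ℤ`: `∑_{|x| ≥ k} v0 n x ≤ ∑_{|x| ≥ k} v n (x₀ + x)`. -/
theorem symmetric_domination
    (p : ℤ → ℝ≥0∞) (hsum : ∑' k : ℤ, p k = 1)
    (hsymm : ∀ k : ℤ, p (-k) = p k)
    (hmono : ∀ k : ℤ, 1 ≤ k → p (k + 1) ≤ p k)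
    (h03 : p 3 ≤ p 0)
    {Ω : Type*} [MeasurableSpace Ω] (μ : Measure Ω) [IsProbabilityMeasure μ]
    (ξ : ℕ → Ω → ℤ)
    (hmeas : ∀ i, Measurable (ξ i))
    (hindep : iIndepFun ξ μ)
    (hlaw : ∀ i k, μ {ω | ξ i ω = k} = p k)
    (φ : ℕ → ℤ)
    (v v0 : ℕ → ℤ → ℝ≥0∞)
    (hv : ∀ m x, v m x = 1 - ∑' z : ℤ, μ {ω |
      z + ∑ i ∈ Finset.range m, ξ i ω = x ∧
      ∀ l ≤ m, ¬(z + ∑ i ∈ Finset.range l, ξ i ω = φ l ∨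
                 z + ∑ i ∈ Finset.range l, ξ i ω = φ (l + 1))})
    (hv0 : ∀ m x, v0 m x = 1 - ∑' z : ℤ, μ {ω |
      z + ∑ i ∈ Finset.range m, ξ i ω = x ∧
      ∀ l ≤ m, ¬(z + ∑ i ∈ Finset.range l, ξ i ω = 0)})
    (n : ℕ) (k : ℕ) (x₀ : ℤ) :
    (∑' x : ℤ, if (k : ℤ) ≤ |x| then v0 n x else 0) ≤
      ∑' x : ℤ, if (k : ℤ) ≤ |x| then v n (x₀ + x) else 0 := by
  have hdeath : ∀ Tr x,
      1 - ∑' z, μ (Pascal.survivalEvent ξ Tr n z x) = Pascal.deathProb p Tr n x := fun Tr x => by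
    rw [Pascal.tsum_measure_survivalEvent μ hsum hmeas hindep hlaw,
      ENNReal.sub_sub_cancel ENNReal.one_ne_top (Pascal.deathProb_le_one hsum n x)]
  have hv' : v n = Pascal.deathProb p (fun l y => y = φ l ∨ y = φ (l + 1)) n :=
    funext fun x => (hv n x).trans (hdeath (fun l y => y = φ l ∨ y = φ (l + 1)) x)
  have hv0' : v0 n = Pascal.deathProb p (fun _ y => y = 0) n :=
    funext fun x => (hv0 n x).trans (hdeath (fun _ y => y = 0) x)
  have := Pascal.tailMass_deathProb_le hsum hsymm hmono h03 φ n k x₀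
  simpa only [Pascal.tailMass_eq_tsum_shift, zero_add, ← hv', ← hv0'] using this
end
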